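/- arXiv:2206.07890 — 5 statements merged into one kernel-verified Lean document; each statement's English description precedes it below -/
import Mathlib

section
/- (Quasi-geodesic Image Theorem.) Let X be a proper geodesic metric space, let Z ⊆ X be a nonempty closed subset that is ρ-contracting for a sublinear function ρ, and let α : [0,T] → X be a continuous (q,Q)-quasi-geodesic segment such that d(α(t), Z) ≥ κ(ρ,q,Q) for all t ∈ [0,T]. Then diam(π_Z(α(0)) ∪ π_Z(α(T))) ≤ ((q²+1)/q²)·(Q + d(α(T),Z)) + ((q²−1)/q²)·d(α(0),Z) + 2ρ(d(α(0),Z)). -/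
open Metric Set Filter

/-- A sublinear function `ρ : [0,∞) → [1,∞)`: nondecreasing, concave, with `ρ(x)/x → 0`. -/
structure IsSublinear (ρ : ℝ → ℝ) : Prop where
  one_le : ∀ x ≥ (0:ℝ), 1 ≤ ρ x
  mono : MonotoneOn ρ (Set.Ici (0:ℝ))
  concave : ConcaveOn ℝ (Set.Ici (0:ℝ)) ρ
  tendsto : Filter.Tendsto (fun x => ρ x / x) Filter.atTop (nhds 0)

/-- `κ(ρ,q,Q) = max {3q, 3q², 3Q, 3Q², 1 + inf {R > 0 | ∀ r ≥ R, 3q²ρ(r) < r}}`. -/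
noncomputable def kappa (ρ : ℝ → ℝ) (q Q : ℝ) : ℝ :=
  max (max (max (3*q) (3*q^2)) (max (3*Q) (3*Q^2)))
    (1 + sInf {R : ℝ | 0 < R ∧ ∀ r ≥ R, 3*q^2 * ρ r < r})

/-- `γ` is a `(q,Q)`-quasi-geodesic on the interval `I`. -/
def IsQGOn {X : Type*} [MetricSpace X] (q Q : ℝ) (γ : ℝ → X) (I : Set ℝ) : Prop :=
  ∀ s ∈ I, ∀ t ∈ I,
    (1/q) * |s - t| - Q ≤ dist (γ s) (γ t) ∧ dist (γ s) (γ t) ≤ q * |s - t| + Q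

/-- A geodesic ray based at `o`. -/
def IsGeodesicRay {X : Type*} [MetricSpace X] (o : X) (b : ℝ → X) : Prop :=
  b 0 = o ∧ ∀ s ∈ Set.Ici (0:ℝ), ∀ t ∈ Set.Ici (0:ℝ), dist (b s) (b t) = |s - t|

/-- A geodesic metric space: any two points are joined by a geodesic segment. -/
def IsGeodesicSpace (X : Type*) [MetricSpace X] : Prop :=
  ∀ x y : X, ∃ f : ℝ → X, f 0 = x ∧ f (dist x y) = y ∧
    ∀ s ∈ Set.Icc 0 (dist x y), ∀ t ∈ Set.Icc 0 (dist x y), dist (f s) (f t) = |s - t|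

/-- The closest-point projection `π_Z(x) = { z ∈ Z | d(x,z) = d(x,Z) }`. -/
def proj {X : Type*} [MetricSpace X] (Z : Set X) (x : X) : Set X :=
  {z ∈ Z | dist x z = Metric.infDist x Z}

/-- `Z` is `ρ`-contracting. -/
def IsContracting {X : Type*} [MetricSpace X] (ρ : ℝ → ℝ) (Z : Set X) : Prop :=
  ∀ x y : X, dist x y ≤ Metric.infDist x Z →
    Metric.diam (proj Z x ∪ proj Z y) ≤ ρ (Metric.infDist x Z)

/-- The first time `t_r` at which a ray based at `o` reaches distance `r` from `o`. -/
noncomputable def firstTime {X : Type*} [MetricSpace X] (o : X) (α : ℝ → X) (r : ℝ) : ℝ :=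
  sInf {t : ℝ | 0 ≤ t ∧ dist o (α t) = r}

/-- The infimal distance between two subsets of a metric space. -/
noncomputable def setDist {X : Type*} [MetricSpace X] (A B : Set X) : ℝ :=
  sInf (Set.image2 dist A B)

/-- `Z` is strongly 1-Morse with gauge `m` (a proper function with `m q Q ≥ max q Q`):
for every sublinear `κ'` and every `r > 0` there is `R > 0` such that every continuous
`(q,Q)`-quasi-geodesic ray `β` based at `o` with `m q Q ≤ r/2` and `d(β_R, Z) ≤ κ'(R)`
satisfies `β|_r ⊆ N(Z, m q Q)`. -/
structure IsStronglyOneMorse {X : Type*} [MetricSpace X] (o : X) (Z : Set X)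
    (m : ℝ → ℝ → ℝ) : Prop where
  gauge_ge : ∀ q, 1 ≤ q → ∀ Q, 0 ≤ Q → max q Q ≤ m q Q
  morse : ∀ κ' : ℝ → ℝ, IsSublinear κ' → ∀ r > (0:ℝ), ∃ R > (0:ℝ),
    ∀ q, 1 ≤ q → ∀ Q, 0 ≤ Q → ∀ β : ℝ → X,
      ContinuousOn β (Set.Ici 0) → IsQGOn q Q β (Set.Ici 0) → β 0 = o →
      m q Q ≤ r / 2 → Metric.infDist (β (firstTime o β R)) Z ≤ κ' R →
      ∀ t ∈ Set.Icc 0 (firstTime o β r), Metric.infDist (β t) Z ≤ m q Q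

/-- Quasi-geodesic Image Theorem. -/
theorem stmt_1 {X : Type*} [MetricSpace X] [ProperSpace X] (hX : IsGeodesicSpace X)
    (Z : Set X) (hZne : Z.Nonempty) (hZcl : IsClosed Z)
    (ρ : ℝ → ℝ) (hρ : IsSublinear ρ) (hcon : IsContracting ρ Z)
    (q Q T : ℝ) (hq : 1 ≤ q) (hQ : 0 ≤ Q) (hT : 0 ≤ T)
    (α : ℝ → X) (hαc : ContinuousOn α (Set.Icc 0 T))
    (hαq : IsQGOn q Q α (Set.Icc 0 T))
    (hfar : ∀ t ∈ Set.Icc 0 T, kappa ρ q Q ≤ Metric.infDist (α t) Z) :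
    Metric.diam (proj Z (α 0) ∪ proj Z (α T)) ≤
      ((q^2 + 1) / q^2) * (Q + Metric.infDist (α T) Z)
        + ((q^2 - 1) / q^2) * Metric.infDist (α 0) Z
        + 2 * ρ (Metric.infDist (α 0) Z) := by
  classical
  set κ := kappa ρ q Q with hκdef
  set dT := Metric.infDist (α T) Z with hdTdef
  have hq0 : (0:ℝ) < q := lt_of_lt_of_le one_pos hq
  have hq2 : (0:ℝ) < q^2 := by positivity
  -- basic kappa bounds
  have h3q : 3*q ≤ κ := le_trans (le_trans (le_max_left _ _) (le_max_left _ _)) (le_max_left _ _)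
  have h3q2 : 3*q^2 ≤ κ := le_trans (le_trans (le_max_right _ _) (le_max_left _ _)) (le_max_left _ _)
  have h3Q : 3*Q ≤ κ := le_trans (le_trans (le_max_left _ _) (le_max_right _ _)) (le_max_left _ _)
  have hSle : 1 + sInf {R : ℝ | 0 < R ∧ ∀ r ≥ R, 3*q^2 * ρ r < r} ≤ κ := le_max_right _ _
  -- key sublinearity consequence
  have key_rho : ∀ r : ℝ, κ ≤ r → 3*q^2 * ρ r < r := by
    intro r hr
    set S := {R : ℝ | 0 < R ∧ ∀ r ≥ R, 3*q^2 * ρ r < r} with hSdef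
    have hSne : S.Nonempty := by
      have hev : ∀ᶠ x in Filter.atTop, ρ x / x < 1/(3*q^2) :=
        hρ.tendsto.eventually_lt_const (by positivity)
      obtain ⟨R, hR⟩ := Filter.eventually_atTop.mp hev
      refine ⟨max R 1, lt_of_lt_of_le one_pos (le_max_right _ _), fun r hr => ?_⟩
      have hr1 : (1:ℝ) ≤ r := le_trans (le_max_right _ _) hr
      have hrR : R ≤ r := le_trans (le_max_left _ _) hr
      have h := hR r hrR
      rw [div_lt_div_iff₀ (by linarith) (by positivity)] at h
      linarith
    have hSbdd : BddBelow S := ⟨0, fun x hx => hx.1.le⟩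
    have hlt : sInf S < r := by
      have : sInf S + 1 ≤ κ := by linarith [hSle]
      linarith
    obtain ⟨R, hRS, hRr⟩ := (csInf_lt_iff hSbdd hSne).mp hlt
    exact hRS.2 r hRr.le
  -- projections are nonempty and bounded
  have projne : ∀ w : X, (proj Z w).Nonempty := by
    intro w
    obtain ⟨z, hzZ, hz⟩ := hZcl.exists_infDist_eq_dist hZne w
    exact ⟨z, hzZ, hz.symm⟩
  have projbdd : ∀ w : X, Bornology.IsBounded (proj Z w) := by
    intro w
    refine (Metric.isBounded_closedBall (x := w) (r := Metric.infDist w Z)).subset ?_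
    intro z hz
    rw [Metric.mem_closedBall, dist_comm]
    exact le_of_eq hz.2
  -- triangle inequality for diameters of unions of projections
  have htri : ∀ x y w : X, Metric.diam (proj Z x ∪ proj Z y) ≤
      Metric.diam (proj Z x ∪ proj Z w) + Metric.diam (proj Z w ∪ proj Z y) := by
    intro x y w
    obtain ⟨b, hb⟩ := projne w
    have hB1 : Bornology.IsBounded (proj Z x ∪ proj Z w) := (projbdd x).union (projbdd w)
    have hB2 : Bornology.IsBounded (proj Z w ∪ proj Z y) := (projbdd w).union (projbdd y)
    refine Metric.diam_le_of_forall_dist_le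
      (add_nonneg Metric.diam_nonneg Metric.diam_nonneg) ?_
    rintro p (hp | hp) r (hr | hr)
    · exact le_trans (Metric.dist_le_diam_of_mem hB1 (Or.inl hp) (Or.inl hr))
        (by linarith [Metric.diam_nonneg (s := proj Z w ∪ proj Z y)])
    · calc dist p r ≤ dist p b + dist b r := dist_triangle _ _ _
        _ ≤ _ := add_le_add (Metric.dist_le_diam_of_mem hB1 (Or.inl hp) (Or.inr hb))
            (Metric.dist_le_diam_of_mem hB2 (Or.inl hb) (Or.inr hr))
    · calc dist p r ≤ dist p b + dist b r := dist_triangle _ _ _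
        _ ≤ Metric.diam (proj Z w ∪ proj Z y) + Metric.diam (proj Z x ∪ proj Z w) :=
            add_le_add (Metric.dist_le_diam_of_mem hB2 (Or.inr hp) (Or.inl hb))
            (Metric.dist_le_diam_of_mem hB1 (Or.inr hb) (Or.inl hr))
        _ = _ := by ring
    · exact le_trans (Metric.dist_le_diam_of_mem hB2 (Or.inr hp) (Or.inr hr))
        (by linarith [Metric.diam_nonneg (s := proj Z x ∪ proj Z w)])
  -- Case A: the remaining endpoint is within projecting distance
  have caseA : ∀ t, t ∈ Set.Icc 0 T → dist (α t) (α T) ≤ Metric.infDist (α t) Z →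
      2*q^2 * Metric.diam (proj Z (α t) ∪ proj Z (α T)) ≤ q * (T - t) + dT := by
    intro t ht hc
    have hdiam := hcon (α t) (α T) hc
    have hκt := hfar t ht
    have hkey := key_rho _ hκt
    have h3Q' : 3*Q ≤ Metric.infDist (α t) Z := le_trans h3Q hκt
    have hδ : dist (α t) (α T) ≤ q * (T - t) + Q := by
      have h := (hαq t ht T ⟨hT, le_refl T⟩).2
      have habs : |t - T| = T - t := by
        rw [abs_sub_comm]; exact abs_of_nonneg (by linarith [ht.2])
      rw [habs] at h; exact h
    have hc2 : Metric.infDist (α t) Z ≤ dT + dist (α t) (α T) :=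
      Metric.infDist_le_infDist_add_dist
    have hmul := mul_le_mul_of_nonneg_left hdiam (show (0:ℝ) ≤ 2*q^2 by positivity)
    nlinarith [hmul, hkey, h3Q', hδ, hc2, dist_nonneg (x := α t) (y := α T)]
  -- Step construction: if the endpoint is farther than the projecting distance,
  -- there is a first time t1 where dist (α t) (α t1) equals infDist (α t) Z.
  have stepB : ∀ t, t ∈ Set.Icc 0 T → ¬ dist (α t) (α T) ≤ Metric.infDist (α t) Z →
      ∃ t1, t1 ∈ Set.Icc 0 T ∧ t + 2 ≤ t1 ∧
        dist (α t) (α t1) = Metric.infDist (α t) Z ∧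
        Metric.infDist (α t) Z ≤ q * (t1 - t) + Q := by
    intro t ht hc
    set c := Metric.infDist (α t) Z with hcdef
    have hκt := hfar t ht
    have hcpos : 0 < c := lt_of_lt_of_le (by linarith) hκt
    have hfc : ContinuousOn (fun u => dist (α t) (α u)) (Set.Icc t T) :=
      (continuous_const.dist continuous_id).comp_continuousOn
        (hαc.mono (Set.Icc_subset_Icc ht.1 le_rfl))
    set A := {u : ℝ | u ∈ Set.Icc t T ∧ c ≤ dist (α t) (α u)} with hAdef
    have hTA : T ∈ A := ⟨⟨ht.2, le_rfl⟩, le_of_lt (not_le.mp hc)⟩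
    have hAne : A.Nonempty := ⟨T, hTA⟩
    have hAbdd : BddBelow A := ⟨t, fun u hu => hu.1.1⟩
    have hAcl : IsClosed A := by
      have heqA : A = Set.Icc t T ∩ (fun u => dist (α t) (α u)) ⁻¹' Set.Ici c := by
        ext u; simp [hAdef, Set.mem_inter_iff, Set.mem_preimage, Set.mem_Ici]
      rw [heqA]
      exact hfc.preimage_isClosed_of_isClosed isClosed_Icc isClosed_Ici
    set t1 := sInf A with ht1def
    have ht1A : t1 ∈ A := hAcl.csInf_mem hAne hAbdd
    have ht1T : t1 ≤ T := ht1A.1.2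
    have htt1 : t ≤ t1 := ht1A.1.1
    have ht1I : t1 ∈ Set.Icc 0 T := ⟨le_trans ht.1 htt1, ht1T⟩
    have heq : dist (α t) (α t1) = c := by
      have hsub : Set.Icc (dist (α t) (α t)) (dist (α t) (α t1)) ⊆
          (fun u => dist (α t) (α u)) '' Set.Icc t t1 :=
        intermediate_value_Icc htt1 (hfc.mono (Set.Icc_subset_Icc le_rfl ht1T))
      have hcmem : c ∈ Set.Icc (dist (α t) (α t)) (dist (α t) (α t1)) := by
        rw [dist_self]; exact ⟨hcpos.le, ht1A.2⟩
      obtain ⟨u, hu, hfu⟩ := hsub hcmem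
      have huA : u ∈ A := ⟨⟨hu.1, le_trans hu.2 ht1T⟩, hfu.ge⟩
      have : t1 ≤ u := csInf_le hAbdd huA
      have huu : u = t1 := le_antisymm hu.2 this
      rw [← huu]; exact hfu
    have hub : c ≤ q * (t1 - t) + Q := by
      have h := (hαq t ht t1 ht1I).2
      have habs : |t - t1| = t1 - t := by
        rw [abs_sub_comm]; exact abs_of_nonneg (by linarith)
      rw [habs, heq] at h; exact h
    have hstep : t + 2 ≤ t1 := by
      have h1 : 2*q ≤ q*(t1 - t) := by linarith [le_trans h3q hκt, le_trans h3Q hκt]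
      nlinarith
    exact ⟨t1, ht1I, hstep, heq, hub⟩
  -- The inductive invariant
  have Inv : ∀ k : ℕ, ∀ t, t ∈ Set.Icc 0 T → T - t ≤ 2 * k →
      2*q^2 * Metric.diam (proj Z (α t) ∪ proj Z (α T)) ≤ q * (T - t) + dT := by
    intro k
    induction k with
    | zero =>
      intro t ht hk
      have htT : t = T := le_antisymm ht.2 (by push_cast at hk; linarith)
      refine caseA t ht ?_
      rw [htT, dist_self]
      exact Metric.infDist_nonneg
    | succ k ih =>
      intro t ht hk
      by_cases hc : dist (α t) (α T) ≤ Metric.infDist (α t) Z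
      · exact caseA t ht hc
      · obtain ⟨t1, ht1, hstep, heq, hub⟩ := stepB t ht hc
        have ihh := ih t1 ht1 (by push_cast at hk ⊢; linarith)
        have htri' := htri (α t) (α T) (α t1)
        have hcon1 := hcon (α t) (α t1) (le_of_eq heq)
        have hkey := key_rho _ (hfar t ht)
        have h3Q' : 3*Q ≤ Metric.infDist (α t) Z := le_trans h3Q (hfar t ht)
        have hmul := mul_le_mul_of_nonneg_left
          (le_trans htri' (add_le_add_left hcon1 _))
          (show (0:ℝ) ≤ 2*q^2 by positivity)
        nlinarith [hmul, ihh, hkey, h3Q', hub]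
  -- Main assembly
  by_cases hcase : dist (α 0) (α T) ≤ Metric.infDist (α 0) Z
  · have hdiam := hcon (α 0) (α T) hcase
    have h1 : 0 ≤ (q^2+1)/q^2 * (Q + dT) :=
      mul_nonneg (by positivity) (add_nonneg hQ Metric.infDist_nonneg)
    have h2 : 0 ≤ (q^2-1)/q^2 * Metric.infDist (α 0) Z :=
      mul_nonneg (div_nonneg (by nlinarith) (by positivity)) Metric.infDist_nonneg
    have h3 : 1 ≤ ρ (Metric.infDist (α 0) Z) := hρ.one_le _ Metric.infDist_nonneg
    linarith
  · obtain ⟨t1, ht1, hstep, heq, hub⟩ := stepB 0 ⟨le_rfl, hT⟩ hcase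
    obtain ⟨k, hk⟩ := exists_nat_ge ((T - t1)/2)
    have hInv := Inv k t1 ht1 (by linarith)
    have htri' := htri (α 0) (α T) (α t1)
    have hcon1 := hcon (α 0) (α t1) (le_of_eq heq)
    have hTub : T ≤ q * (dist (α 0) (α T) + Q) := by
      have hlb := (hαq 0 ⟨le_rfl, hT⟩ T ⟨hT, le_rfl⟩).1
      have habs : |(0:ℝ) - T| = T := by rw [zero_sub, abs_neg]; exact abs_of_nonneg hT
      rw [habs] at hlb
      have h1 : T / q ≤ dist (α 0) (α T) + Q := by
        have : (1/q)*T = T/q := by ring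
        linarith [hlb, this]
      exact (div_le_iff₀' hq0).mp h1
    obtain ⟨x', hx'⟩ := projne (α 0)
    obtain ⟨y', hy'⟩ := projne (α T)
    have hbU : Bornology.IsBounded (proj Z (α 0) ∪ proj Z (α T)) :=
      (projbdd _).union (projbdd _)
    have hxy' : dist x' y' ≤ Metric.diam (proj Z (α 0) ∪ proj Z (α T)) :=
      Metric.dist_le_diam_of_mem hbU (Or.inl hx') (Or.inr hy')
    have hdist : dist (α 0) (α T) ≤ Metric.infDist (α 0) Z +
        Metric.diam (proj Z (α 0) ∪ proj Z (α T)) + dT := by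
      have h4 := dist_triangle4 (α 0) x' y' (α T)
      have hx2 : dist (α 0) x' = Metric.infDist (α 0) Z := hx'.2
      have hy2 : dist y' (α T) = dT := by rw [dist_comm]; exact hy'.2
      linarith
    have hmul := mul_le_mul_of_nonneg_left
      (le_trans htri' (add_le_add_left hcon1 _))
      (show (0:ℝ) ≤ 2*q^2 by positivity)
    have hTq := mul_le_mul_of_nonneg_left hTub hq0.le
    have hdq := mul_le_mul_of_nonneg_left hdist (le_of_lt hq2)
    have key : q^2 * Metric.diam (proj Z (α 0) ∪ proj Z (α T)) ≤
        (q^2+1)*(Q + dT) + (q^2-1)*Metric.infDist (α 0) Z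
          + 2*q^2*ρ (Metric.infDist (α 0) Z) := by
      nlinarith [hmul, hInv, hub, hTq, hdq]
    have hRHS : ((q^2+1)/q^2)*(Q + dT) + ((q^2-1)/q^2)*Metric.infDist (α 0) Z
        + 2*ρ (Metric.infDist (α 0) Z) =
        ((q^2+1)*(Q + dT) + (q^2-1)*Metric.infDist (α 0) Z
          + 2*q^2*ρ (Metric.infDist (α 0) Z))/q^2 := by
      field_simp
    rw [hRHS, le_div_iff₀ hq2]
    linarith [key]
end

section
/- Let X be a proper geodesic metric space with basepoint o. Let α be a continuous (q₁,Q₁)-quasi-geodesic ray based at o and β a continuous (q₂,Q₂)-quasi-geodesic ray based at o, and suppose the image of α is strongly 1-Morse with gauge m_α and the image of β is strongly 1-Morse with gauge m_β. If lim_{r→∞} d(α_r, β_r)/r = 0, then the Hausdorff distance between the images of α and β is at most max(m_α(q₂,Q₂), m_β(q₁,Q₁)); in particular it is finite. -/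
open Metric Set Filter

lemma firstTime_spec {X : Type*} [MetricSpace X] {o : X} {q Q : ℝ} (hq : 1 ≤ q) (hQ : 0 ≤ Q)
    {γ : ℝ → X} (hc : ContinuousOn γ (Set.Ici 0)) (hqg : IsQGOn q Q γ (Set.Ici 0))
    (h0 : γ 0 = o) {r : ℝ} (hr : 0 ≤ r) :
    0 ≤ firstTime o γ r ∧ dist o (γ (firstTime o γ r)) = r ∧
      ∀ t ≥ (0:ℝ), q * t + Q ≤ r → t ≤ firstTime o γ r := by
  have hq0 : 0 < q := lt_of_lt_of_le one_pos hq
  set S : Set ℝ := {t : ℝ | 0 ≤ t ∧ dist o (γ t) = r} with hS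
  set g : ℝ → ℝ := fun t => dist o (γ t) with hg
  have hgc : ContinuousOn g (Set.Ici 0) := (continuous_const.dist continuous_id).comp_continuousOn hc |>.congr (fun x _ => rfl)
  have hs0 : (0:ℝ) ≤ q * (r + Q) := by positivity
  have hub : r ≤ g (q * (r + Q)) := by
    have := (hqg 0 Set.self_mem_Ici (q * (r + Q)) hs0).1
    have habs : |0 - q * (r + Q)| = q * (r + Q) := by
      rw [abs_sub_comm, sub_zero, abs_of_nonneg hs0]
    rw [habs] at this
    have h1 : (1/q) * (q * (r + Q)) - Q = r := by field_simp; ring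
    calc r = (1/q) * (q * (r + Q)) - Q := h1.symm
      _ ≤ dist (γ 0) (γ (q * (r + Q))) := this
      _ = g (q * (r + Q)) := by simp only [hg, h0, dist_comm]
  have hSne : S.Nonempty := by
    have hivt := intermediate_value_Icc hs0 (hgc.mono Icc_subset_Ici_self)
    have hr' : r ∈ Set.Icc (g 0) (g (q * (r + Q))) := by
      constructor
      · simpa [hg, h0] using hr
      · exact hub
    obtain ⟨c, hc1, hc2⟩ := hivt hr'
    exact ⟨c, hc1.1, hc2⟩
  have hSbdd : BddBelow S := ⟨0, fun t ht => ht.1⟩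
  have hSclosed : IsClosed S := by
    have : S = Set.Ici 0 ∩ g ⁻¹' {r} := by
      ext t; simp only [hS, Set.mem_setOf_eq, Set.mem_inter_iff, Set.mem_Ici,
        Set.mem_preimage, Set.mem_singleton_iff]; exact Iff.rfl
    rw [this]
    exact hgc.preimage_isClosed_of_isClosed isClosed_Ici isClosed_singleton
  have hmem : firstTime o γ r ∈ S := hSclosed.csInf_mem hSne hSbdd
  refine ⟨hmem.1, hmem.2, fun t ht hle => ?_⟩
  apply le_csInf hSne
  intro s hs
  have := (hqg 0 Set.self_mem_Ici s hs.1).2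
  rw [abs_sub_comm, sub_zero, abs_of_nonneg hs.1] at this
  rw [h0, hs.2] at this
  nlinarith [hs.1, hq0]


lemma exists_sublinear_majorant (f : ℝ → ℝ) (hf2 : ∀ r ≥ (0:ℝ), f r ≤ 2 * r)
    (hft : Filter.Tendsto (fun r => f r / r) Filter.atTop (nhds 0)) :
    ∃ κ : ℝ → ℝ, IsSublinear κ ∧ ∀ r ≥ (0:ℝ), f r ≤ κ r := by
  set P : ℝ → ℝ → Prop := fun a b => 0 ≤ a ∧ ∀ r ≥ (0:ℝ), max 1 (f r) ≤ a * r + b with hP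
  set S : ℝ → Set ℝ := fun x => {y | ∃ a b, P a b ∧ y = a * x + b} with hSdef
  set κ : ℝ → ℝ := fun x => sInf (S x) with hκdef
  have hP21 : P 2 1 := by
    refine ⟨by norm_num, fun r hr => ?_⟩
    rcases max_cases 1 (f r) with ⟨h1, _⟩ | ⟨h1, _⟩ <;> rw [h1] <;> nlinarith [hf2 r hr]
  have hSne : ∀ x, (S x).Nonempty := fun x => ⟨2 * x + 1, 2, 1, hP21, rfl⟩
  have hlb : ∀ x ≥ (0:ℝ), ∀ y ∈ S x, max 1 (f x) ≤ y := by
    rintro x hx y ⟨a, b, hPab, rfl⟩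
    exact hPab.2 x hx
  have hSbdd : ∀ x ≥ (0:ℝ), BddBelow (S x) := fun x hx => ⟨max 1 (f x), hlb x hx⟩
  have hκ_ge : ∀ x ≥ (0:ℝ), max 1 (f x) ≤ κ x := fun x hx => le_csInf (hSne x) (hlb x hx)
  refine ⟨κ, ⟨fun x hx => le_trans (le_max_left _ _) (hκ_ge x hx), ?_, ?_, ?_⟩,
    fun r hr => le_trans (le_max_right _ _) (hκ_ge r hr)⟩
  · -- monotone
    intro x hx y hy hxy
    refine le_csInf (hSne y) ?_
    rintro z ⟨a, b, hPab, rfl⟩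
    have h1 : κ x ≤ a * x + b := csInf_le (hSbdd x hx) ⟨a, b, hPab, rfl⟩
    nlinarith [hPab.1]
  · -- concave
    refine ⟨convex_Ici 0, fun x hx y hy a b ha hb hab => ?_⟩
    simp only [smul_eq_mul]
    refine le_csInf (hSne _) ?_
    rintro z ⟨c, d, hPcd, rfl⟩
    have h1 : κ x ≤ c * x + d := csInf_le (hSbdd x hx) ⟨c, d, hPcd, rfl⟩
    have h2 : κ y ≤ c * y + d := csInf_le (hSbdd y hy) ⟨c, d, hPcd, rfl⟩
    have e1 := mul_le_mul_of_nonneg_left h1 ha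
    have e2 := mul_le_mul_of_nonneg_left h2 hb
    have e3 : a*(c*x+d) + b*(c*y+d) = c*(a*x+b*y) + d := by linear_combination d * hab
    linarith
  · -- tendsto
    rw [Metric.tendsto_atTop]
    intro ε hε
    rw [Metric.tendsto_atTop] at hft
    obtain ⟨N, hN⟩ := hft (ε/4) (by linarith)
    set R : ℝ := max N 1 with hR
    have hR1 : (1:ℝ) ≤ R := le_max_right _ _
    have hPc : P (ε/4) (2*R+1) := by
      refine ⟨by linarith, fun r hr => ?_⟩
      have h1 : (1:ℝ) ≤ (ε/4) * r + (2*R+1) := by nlinarith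
      rcases le_total r R with h | h
      · rcases max_cases 1 (f r) with ⟨he, _⟩ | ⟨he, _⟩ <;> rw [he] <;>
          nlinarith [hf2 r hr]
      · have hrN : r ≥ N := le_trans (le_max_left _ _) h
        have hr1 : (1:ℝ) ≤ r := le_trans hR1 h
        have := hN r hrN
        rw [Real.dist_eq, sub_zero] at this
        have hfr : f r / r < ε/4 := lt_of_le_of_lt (le_abs_self _) this
        have hfr' : f r < (ε/4) * r := by
          rw [div_lt_iff₀ (by linarith : (0:ℝ) < r)] at hfr; linarith [hfr]
        rcases max_cases 1 (f r) with ⟨he, _⟩ | ⟨he, _⟩ <;> rw [he] <;> nlinarith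
    have hκle : ∀ x ≥ (0:ℝ), κ x ≤ (ε/4) * x + (2*R+1) := fun x hx =>
      csInf_le (hSbdd x hx) ⟨ε/4, 2*R+1, hPc, rfl⟩
    refine ⟨max 1 (4*(2*R+1)/ε), fun x hx => ?_⟩
    have hx1 : (1:ℝ) ≤ x := le_trans (le_max_left _ _) hx
    have hx0 : (0:ℝ) < x := by linarith
    have hx2 : 4*(2*R+1)/ε ≤ x := le_trans (le_max_right _ _) hx
    have hb : 2*R+1 ≤ (ε/4) * x := by
      rw [div_le_iff₀ hε] at hx2; nlinarith
    have hκx : κ x ≤ (ε/2) * x := by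
      have := hκle x hx0.le; linarith
    have hκx0 : 0 ≤ κ x := le_trans (by norm_num) (le_trans (le_max_left 1 (f x)) (hκ_ge x (le_of_lt hx0)))
    rw [Real.dist_eq, sub_zero, abs_of_nonneg (div_nonneg hκx0 hx0.le), div_lt_iff₀ hx0]
    nlinarith

/-- If two continuous quasi-geodesic rays based at o with strongly 1-Morse images
sublinearly fellow travel, then their Hausdorff distance is at most the maximum of the
two Morse gauges evaluated at the other ray's constants; in particular it is finite. -/

theorem stmt_4 {X : Type*} [MetricSpace X] [ProperSpace X] (hX : IsGeodesicSpace X)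
    (o : X) (q₁ Q₁ q₂ Q₂ : ℝ) (hq₁ : 1 ≤ q₁) (hQ₁ : 0 ≤ Q₁) (hq₂ : 1 ≤ q₂) (hQ₂ : 0 ≤ Q₂)
    (α β : ℝ → X)
    (hαc : ContinuousOn α (Set.Ici 0)) (hαq : IsQGOn q₁ Q₁ α (Set.Ici 0)) (hα0 : α 0 = o)
    (hβc : ContinuousOn β (Set.Ici 0)) (hβq : IsQGOn q₂ Q₂ β (Set.Ici 0)) (hβ0 : β 0 = o)
    (mα mβ : ℝ → ℝ → ℝ)
    (hαM : IsStronglyOneMorse o (α '' Set.Ici 0) mα)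
    (hβM : IsStronglyOneMorse o (β '' Set.Ici 0) mβ)
    (hfellow : Filter.Tendsto
      (fun r => dist (α (firstTime o α r)) (β (firstTime o β r)) / r)
      Filter.atTop (nhds 0)) :
    EMetric.hausdorffEdist (α '' Set.Ici 0) (β '' Set.Ici 0)
      ≤ ENNReal.ofReal (max (mα q₂ Q₂) (mβ q₁ Q₁)) := by
  have hαspec := fun (r : ℝ) (hr : 0 ≤ r) => firstTime_spec hq₁ hQ₁ hαc hαq hα0 hr
  have hβspec := fun (r : ℝ) (hr : 0 ≤ r) => firstTime_spec hq₂ hQ₂ hβc hβq hβ0 hr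
  set f : ℝ → X := α with hfa
  set A : Set X := α '' Set.Ici 0 with hA
  set B : Set X := β '' Set.Ici 0 with hB
  set M : ℝ := max (mα q₂ Q₂) (mβ q₁ Q₁) with hM
  have hmα1 : 1 ≤ mα q₂ Q₂ :=
    le_trans (le_trans hq₂ (le_max_left q₂ Q₂)) (hαM.gauge_ge q₂ hq₂ Q₂ hQ₂)
  have hmβ1 : 1 ≤ mβ q₁ Q₁ :=
    le_trans (le_trans hq₁ (le_max_left q₁ Q₁)) (hβM.gauge_ge q₁ hq₁ Q₁ hQ₁)
  have hM0 : (0:ℝ) ≤ M := le_trans (by linarith) (le_max_left _ _)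
  have hd2 : ∀ r ≥ (0:ℝ),
      dist (α (firstTime o α r)) (β (firstTime o β r)) ≤ 2 * r := by
    intro r hr
    have h1 := (hαspec r hr).2.1
    have h2 := (hβspec r hr).2.1
    calc dist (α (firstTime o α r)) (β (firstTime o β r))
        ≤ dist (α (firstTime o α r)) o + dist o (β (firstTime o β r)) := dist_triangle _ _ _
      _ = r + r := by rw [dist_comm (α (firstTime o α r)) o, h1, h2]
      _ = 2 * r := by ring
  obtain ⟨κ, hκsub, hκge⟩ := exists_sublinear_majorant
    (fun r => dist (α (firstTime o α r)) (β (firstTime o β r))) hd2 hfellow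
  -- β stays close to the image of α
  have keyβ : ∀ t ≥ (0:ℝ), Metric.infDist (β t) A ≤ mα q₂ Q₂ := by
    intro t ht
    set r : ℝ := max (2 * mα q₂ Q₂) (q₂ * t + Q₂) with hr
    have hr0 : (0:ℝ) < r := lt_of_lt_of_le (by linarith) (le_max_left _ _)
    obtain ⟨R, hR0, hmorse⟩ := hαM.morse κ hκsub r hr0
    have hinf : Metric.infDist (β (firstTime o β R)) A ≤ κ R := by
      have hmem : α (firstTime o α R) ∈ A := ⟨_, (hαspec R hR0.le).1, rfl⟩
      calc Metric.infDist (β (firstTime o β R)) A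
          ≤ dist (β (firstTime o β R)) (α (firstTime o α R)) :=
            Metric.infDist_le_dist_of_mem hmem
        _ = dist (α (firstTime o α R)) (β (firstTime o β R)) := dist_comm _ _
        _ ≤ κ R := hκge R hR0.le
    refine hmorse q₂ hq₂ Q₂ hQ₂ β hβc hβq hβ0 ?_ hinf t
      ⟨ht, (hβspec r hr0.le).2.2 t ht (le_max_right _ _)⟩
    have := le_max_left (2 * mα q₂ Q₂) (q₂ * t + Q₂)
    linarith
  -- α stays close to the image of β
  have keyα : ∀ t ≥ (0:ℝ), Metric.infDist (α t) B ≤ mβ q₁ Q₁ := by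
    intro t ht
    set r : ℝ := max (2 * mβ q₁ Q₁) (q₁ * t + Q₁) with hr
    have hr0 : (0:ℝ) < r := lt_of_lt_of_le (by linarith) (le_max_left _ _)
    obtain ⟨R, hR0, hmorse⟩ := hβM.morse κ hκsub r hr0
    have hinf : Metric.infDist (α (firstTime o α R)) B ≤ κ R := by
      have hmem : β (firstTime o β R) ∈ B := ⟨_, (hβspec R hR0.le).1, rfl⟩
      calc Metric.infDist (α (firstTime o α R)) B
          ≤ dist (α (firstTime o α R)) (β (firstTime o β R)) :=
            Metric.infDist_le_dist_of_mem hmem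
        _ ≤ κ R := hκge R hR0.le
    refine hmorse q₁ hq₁ Q₁ hQ₁ α hαc hαq hα0 ?_ hinf t
      ⟨ht, (hαspec r hr0.le).2.2 t ht (le_max_right _ _)⟩
    have := le_max_left (2 * mβ q₁ Q₁) (q₁ * t + Q₁)
    linarith
  have hAne : A.Nonempty := ⟨α 0, 0, Set.self_mem_Ici, rfl⟩
  have hBne : B.Nonempty := ⟨β 0, 0, Set.self_mem_Ici, rfl⟩
  apply EMetric.hausdorffEdist_le_of_infEdist
  · rintro x ⟨u, hu, rfl⟩
    rw [ENNReal.le_ofReal_iff_toReal_le (Metric.infEdist_ne_top hBne) hM0]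
    exact le_trans (keyα u hu) (le_max_right _ _)
  · rintro x ⟨u, hu, rfl⟩
    rw [ENNReal.le_ofReal_iff_toReal_le (Metric.infEdist_ne_top hAne) hM0]
    exact le_trans (keyβ u hu) (le_max_left _ _)
end

section
/- Let X be a proper geodesic metric space with basepoint o, and let b : [0,∞) → X be a geodesic ray based at o whose image is ρ_b-contracting for a sublinear function ρ_b and is strongly 1-Morse with gauge m_b. Then for every r > 0 there exists R > 0 such that every continuous (q,Q)-quasi-geodesic ray α based at o with m_b(q,Q) ≤ r/2 and d(Im α, b([R,∞))) ≤ κ(ρ_b,q,Q) satisfies α|_r ⊆ N(Im b, m_b(q,Q)). -/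
open Metric Set Filter

set_option maxHeartbeats 1000000

lemma chain_bound {X : Type*} [MetricSpace X] [ProperSpace X]
    (Z : Set X) (hZc : IsClosed Z) (hZn : Z.Nonempty)
    (ρ : ℝ → ℝ) (hρ : IsSublinear ρ) (hcon : IsContracting ρ Z)
    (q Q : ℝ) (hq : 1 ≤ q) (hQ : 0 ≤ Q)
    (γ : ℝ → X) (s : ℝ) (hs : 0 ≤ s)
    (hγc : ContinuousOn γ (Set.Icc 0 s)) (hγ : IsQGOn q Q γ (Set.Icc 0 s))
    (C : ℝ) (hC : 0 ≤ C)
    (hend0 : Metric.infDist (γ 0) Z ≤ C) (hends : Metric.infDist (γ s) Z ≤ C)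
    (X₀ : ℝ) (hX₁ : 1 ≤ X₀) (hX₀ : ∀ x ≥ X₀, 44*q^4 * ρ x < x) :
    ∀ t ∈ Set.Icc 0 s, Metric.infDist (γ t) Z ≤ max X₀ (16*q^2*(Q+C+1)) := by
  have hq0 : (0:ℝ) < q := lt_of_lt_of_le one_pos hq
  set f : ℝ → ℝ := fun u => Metric.infDist (γ u) Z with hfdef
  have hfc : ContinuousOn f (Set.Icc 0 s) :=
    (continuous_infDist_pt Z).comp_continuousOn hγc
  obtain ⟨u₀, hu₀, hmax⟩ := (isCompact_Icc : IsCompact (Set.Icc 0 s)).exists_isMaxOn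
    ⟨0, le_refl 0, hs⟩ hfc
  set M := f u₀ with hMdef
  have hmax' : ∀ u ∈ Set.Icc 0 s, f u ≤ M := fun u hu => hmax hu
  suffices hMb : M ≤ max X₀ (16*q^2*(Q+C+1)) by
    intro t ht; exact le_trans (hmax' t ht) hMb
  by_contra hcontra
  push_neg at hcontra
  have hMX : X₀ < M := lt_of_le_of_lt (le_max_left _ _) hcontra
  have hMK : 16*q^2*(Q+C+1) < M := lt_of_le_of_lt (le_max_right _ _) hcontra
  have hM0 : (0:ℝ) < M := lt_of_lt_of_le (lt_of_lt_of_le one_pos hX₁) hMX.le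
  have hρM1 : 1 ≤ ρ M := hρ.one_le M hM0.le
  have hρM : 44*q^4 * ρ M < M := hX₀ M hMX.le
  set θ : ℝ := 4*q^2*ρ M + Q + C + 1 with hθdef
  have hρM0 : (0:ℝ) ≤ ρ M := by linarith
  have hq2 : 1 ≤ q^2 := by
    calc (1:ℝ) = 1*1 := by ring
    _ ≤ q*q := mul_le_mul hq hq zero_le_one hq0.le
    _ = q^2 := by ring
  have hq20 : (0:ℝ) ≤ q^2 := by linarith
  have hq4 : q^2 ≤ q^4 := by
    calc q^2 = 1*q^2 := by ring
    _ ≤ q^2*q^2 := mul_le_mul_of_nonneg_right hq2 hq20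
    _ = q^4 := by ring
  have hKpos : (0:ℝ) < Q + C + 1 := by linarith
  have hq2ρ : q^2 * ρ M ≤ q^4 * ρ M := mul_le_mul_of_nonneg_right hq4 hρM0
  have hq2ρ0 : (0:ℝ) ≤ q^2 * ρ M := mul_nonneg hq20 hρM0
  have hK1 : Q + C + 1 ≤ q^2*(Q+C+1) := by
    calc Q + C + 1 = 1*(Q+C+1) := by ring
    _ ≤ q^2*(Q+C+1) := mul_le_mul_of_nonneg_right hq2 hKpos.le
  have hθpos : 0 < θ := by linarith
  have hCθ : C ≤ θ := by linarith
  have h2θM : 2*θ < M := by linarith [hq2ρ, hK1, hρM, hMK]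
  have hθM : θ < M := by linarith
  -- excursion interval
  set A := Set.Icc 0 u₀ ∩ f ⁻¹' (Set.Iic θ) with hAdef
  have hAne : (0:ℝ) ∈ A := ⟨⟨le_refl 0, hu₀.1⟩, le_trans hend0 hCθ⟩
  have hAclosed : IsClosed A :=
    (hfc.mono (Set.Icc_subset_Icc le_rfl hu₀.2)).preimage_isClosed_of_isClosed
      isClosed_Icc isClosed_Iic
  have hAbdd : BddAbove A := ⟨u₀, fun x hx => hx.1.2⟩
  set t₁ := sSup A with ht₁def
  have ht₁A : t₁ ∈ A := hAclosed.csSup_mem ⟨0, hAne⟩ hAbdd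
  set B := Set.Icc u₀ s ∩ f ⁻¹' (Set.Iic θ) with hBdef
  have hBne : s ∈ B := ⟨⟨hu₀.2, le_refl s⟩, le_trans hends hCθ⟩
  have hBclosed : IsClosed B :=
    (hfc.mono (Set.Icc_subset_Icc hu₀.1 le_rfl)).preimage_isClosed_of_isClosed
      isClosed_Icc isClosed_Iic
  have hBbdd : BddBelow B := ⟨u₀, fun x hx => hx.1.1⟩
  set t₂ := sInf B with ht₂def
  have ht₂B : t₂ ∈ B := hBclosed.csInf_mem ⟨s, hBne⟩ hBbdd
  have ht₁0 : 0 ≤ t₁ := ht₁A.1.1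
  have ht₁u₀ : t₁ ≤ u₀ := ht₁A.1.2
  have ht₂u₀ : u₀ ≤ t₂ := ht₂B.1.1
  have ht₂s : t₂ ≤ s := ht₂B.1.2
  have hft₁ : f t₁ ≤ θ := ht₁A.2
  have hft₂ : f t₂ ≤ θ := ht₂B.2
  have ht₁lt : t₁ < u₀ := by
    rcases lt_or_eq_of_le ht₁u₀ with h | h
    · exact h
    · exfalso; rw [h] at hft₁; exact absurd hft₁ (not_le.mpr hθM)
  have ht₂gt : u₀ < t₂ := by
    rcases lt_or_eq_of_le ht₂u₀ with h | h
    · exact h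
    · exfalso; rw [← h] at hft₂; exact absurd hft₂ (not_le.mpr hθM)
  have ht₁₂ : t₁ < t₂ := lt_trans ht₁lt ht₂gt
  have hint : ∀ v, t₁ < v → v < t₂ → θ ≤ f v := by
    intro v hv1 hv2
    by_contra hle
    push_neg at hle
    rcases le_or_gt v u₀ with h | h
    · exact absurd (le_csSup hAbdd ⟨⟨le_trans ht₁0 hv1.le, h⟩, hle.le⟩) (not_le.mpr hv1)
    · exact absurd (csInf_le hBbdd ⟨⟨h.le, le_trans hv2.le ht₂s⟩, hle.le⟩) (not_le.mpr hv2)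
  -- membership in [0,s] for points of [t₁,t₂]
  have hsubset : Set.Icc t₁ t₂ ⊆ Set.Icc 0 s :=
    Set.Icc_subset_Icc ht₁0 ht₂s
  -- quasi-geodesic bound for the top point
  have ht₁mem : t₁ ∈ Set.Icc 0 s := hsubset ⟨le_refl t₁, ht₁₂.le⟩
  have ht₂mem : t₂ ∈ Set.Icc 0 s := hsubset ⟨ht₁₂.le, le_refl t₂⟩
  have hMle : M ≤ θ + (q * (u₀ - t₁) + Q) := by
    have h1 : Metric.infDist (γ u₀) Z ≤ Metric.infDist (γ t₁) Z + dist (γ u₀) (γ t₁) :=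
      Metric.infDist_le_infDist_add_dist
    have h2 : dist (γ u₀) (γ t₁) ≤ q * |u₀ - t₁| + Q := (hγ u₀ hu₀ t₁ ht₁mem).2
    have h3 : |u₀ - t₁| = u₀ - t₁ := abs_of_nonneg (by linarith)
    rw [h3] at h2
    calc M = Metric.infDist (γ u₀) Z := rfl
    _ ≤ Metric.infDist (γ t₁) Z + dist (γ u₀) (γ t₁) := h1
    _ ≤ θ + (q * (u₀ - t₁) + Q) := by
        have : Metric.infDist (γ t₁) Z = f t₁ := rfl
        rw [this]; linarith
  set T := t₂ - t₁ with hTdef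
  have hT0 : 0 < T := by simp only [hTdef]; linarith
  set h : ℝ := (θ - Q) / q with hhdef
  have hθQ : 0 < θ - Q := by linarith
  have hqh : q * h = θ - Q := by rw [hhdef]; field_simp [hq0.ne']
  have hh4 : 4*q*ρ M ≤ h := by
    rw [hhdef, le_div_iff₀ hq0]
    have h1 : 4*q*ρ M * q = 4*(q^2*ρ M) := by ring
    linarith
  have hh0 : 0 < h := div_pos hθQ hq0
  rcases le_or_gt T h with hTh | hTh
  · -- short excursion: direct contradiction
    have hu₀h : u₀ - t₁ ≤ h := by simp only [hTdef] at hTh; linarith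
    have h1 : q*(u₀ - t₁) ≤ q*h := mul_le_mul_of_nonneg_left hu₀h hq0.le
    have : M ≤ 2*θ := by linarith [hMle, hqh]
    linarith
  -- long excursion: chain argument
  set n : ℕ := ⌈T / h⌉₊ with hndef
  have hTh0 : 0 ≤ T / h := by positivity
  have hn_ge : T / h ≤ (n:ℝ) := Nat.le_ceil _
  have hn_le : (n:ℝ) < T / h + 1 := Nat.ceil_lt_add_one hTh0
  have hnh : T ≤ (n:ℝ) * h := by
    rw [div_le_iff₀ hh0] at hn_ge; linarith
  have hnh' : (n:ℝ) * h ≤ T + h := by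
    have := hn_le
    have h2 : (n:ℝ) * h < (T/h + 1) * h := by
      apply mul_lt_mul_of_pos_right this hh0
    rw [add_mul, div_mul_cancel₀ _ (ne_of_gt hh0)] at h2
    linarith [h2, mul_le_mul_of_nonneg_right hn_le.le hh0.le]
  set u : ℕ → ℝ := fun i => min (t₁ + (i:ℝ)*h) t₂ with hudef
  have hu0 : u 0 = t₁ := by
    simp only [hudef, Nat.cast_zero, zero_mul, add_zero]
    exact min_eq_left ht₁₂.le
  have hun : u n = t₂ := by
    simp only [hudef]
    exact min_eq_right (by linarith)
  have humem : ∀ i, u i ∈ Set.Icc t₁ t₂ := by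
    intro i
    constructor
    · apply le_min _ ht₁₂.le
      have : (0:ℝ) ≤ (i:ℝ)*h := by positivity
      linarith
    · exact min_le_right _ _
  have hus : ∀ i, u i ∈ Set.Icc 0 s := fun i => hsubset (humem i)
  have humono : ∀ i, u i ≤ u (i+1) := by
    intro i
    apply min_le_min _ le_rfl
    have h1 : (i:ℝ)*h ≤ ((i:ℝ)+1)*h :=
      mul_le_mul_of_nonneg_right (by linarith) hh0.le
    push_cast
    linarith
  have hustep : ∀ i, u (i+1) ≤ u i + h := by
    intro i
    have h1 : t₁ + ((i:ℝ)+1)*h = (t₁ + (i:ℝ)*h) + h := by ring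
    calc u (i+1) = min (t₁ + ((i:ℝ)+1)*h) t₂ := by simp only [hudef]; push_cast; ring_nf
    _ ≤ min ((t₁ + (i:ℝ)*h) + h) (t₂ + h) := min_le_min (le_of_eq h1) (by linarith)
    _ = min (t₁ + (i:ℝ)*h) t₂ + h := by rw [min_add_add_right]
    _ = u i + h := rfl
  -- closest point projection
  have hcp : ∀ x : X, ∃ y, y ∈ Z ∧ Metric.infDist x Z = dist x y := by
    intro x
    obtain ⟨y, hy, hyd⟩ := hZc.exists_infDist_eq_dist hZn x
    exact ⟨y, hy, hyd⟩
  set cp : X → X := fun x => Classical.choose (hcp x) with hcpdef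
  have hcpspec : ∀ x, cp x ∈ Z ∧ Metric.infDist x Z = dist x (cp x) :=
    fun x => Classical.choose_spec (hcp x)
  have hcpproj : ∀ x, cp x ∈ proj Z x := fun x => ⟨(hcpspec x).1, ((hcpspec x).2).symm⟩
  have hprojb : ∀ x : X, Bornology.IsBounded (proj Z x) := by
    intro x
    apply (Metric.isBounded_closedBall (x := x) (r := Metric.infDist x Z)).subset
    intro z hz
    rw [Metric.mem_closedBall, dist_comm]
    exact le_of_eq hz.2
  set p : ℕ → X := fun i => cp (γ (u i)) with hpdef
  have hρmono : ∀ v ∈ Set.Icc 0 s, ρ (f v) ≤ ρ M := by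
    intro v hv
    exact hρ.mono (Metric.infDist_nonneg) (le_of_lt hM0) (hmax' v hv)
  -- the key jump estimate
  have hjump : ∀ i, i < n → dist (p i) (p (i+1)) ≤ ρ M := by
    intro i hi
    rcases eq_or_lt_of_le (humono i) with heq | hlt
    · simp only [hpdef]; rw [heq, dist_self]; linarith
    · have huit : u i < t₂ := lt_of_lt_of_le hlt (humem (i+1)).2
      have huieq : u i = t₁ + (i:ℝ)*h := by
        rcases min_cases (t₁ + (i:ℝ)*h) t₂ with ⟨h1, _⟩ | ⟨h1, h2⟩
        · exact h1
        · exfalso; rw [hudef] at huit; simp only at huit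
          exact absurd h1 (ne_of_lt huit)
      have hdistb : dist (γ (u i)) (γ (u (i+1))) ≤ θ := by
        have h2 := (hγ (u i) (hus i) (u (i+1)) (hus (i+1))).2
        have h3 : |u i - u (i+1)| ≤ h := by
          rw [abs_sub_comm, abs_of_nonneg (by linarith [humono i])]
          linarith [hustep i]
        have h4 : q * |u i - u (i+1)| ≤ q * h :=
          mul_le_mul_of_nonneg_left h3 hq0.le
        linarith [h2, hqh]
      by_cases hi0 : i = 0
      · subst hi0
        have hu1 : u 1 = t₁ + h := by
          simp only [hudef, Nat.cast_one, one_mul]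
          exact min_eq_left (by linarith)
        have hu1int : θ ≤ f (u 1) := by
          apply hint
          · rw [hu1]; linarith
          · rw [hu1]; linarith
        have hdist' : dist (γ (u 1)) (γ (u 0)) ≤ Metric.infDist (γ (u 1)) Z := by
          rw [dist_comm]; exact le_trans hdistb hu1int
        have hc := hcon (γ (u 1)) (γ (u 0)) hdist'
        have hb : Bornology.IsBounded (proj Z (γ (u 1)) ∪ proj Z (γ (u 0))) :=
          (hprojb _).union (hprojb _)
        have hd := Metric.dist_le_diam_of_mem hb
          (Set.mem_union_right _ (hcpproj (γ (u 0))))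
          (Set.mem_union_left _ (hcpproj (γ (u 1))))
        calc dist (p 0) (p 1) ≤ Metric.diam (proj Z (γ (u 1)) ∪ proj Z (γ (u 0))) := hd
        _ ≤ ρ (Metric.infDist (γ (u 1)) Z) := hc
        _ ≤ ρ M := hρmono (u 1) (hus 1)
      · have hi1 : 1 ≤ i := Nat.one_le_iff_ne_zero.mpr hi0
        have huiint : θ ≤ f (u i) := by
          apply hint _ _ huit
          rw [huieq]
          have h5 : (1:ℝ) ≤ (i:ℝ) := by exact_mod_cast hi1
          have h6 : 1*h ≤ (i:ℝ)*h := mul_le_mul_of_nonneg_right h5 hh0.le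
          linarith
        have hdist' : dist (γ (u i)) (γ (u (i+1))) ≤ Metric.infDist (γ (u i)) Z :=
          le_trans hdistb huiint
        have hc := hcon (γ (u i)) (γ (u (i+1))) hdist'
        have hb : Bornology.IsBounded (proj Z (γ (u i)) ∪ proj Z (γ (u (i+1)))) :=
          (hprojb _).union (hprojb _)
        have hd := Metric.dist_le_diam_of_mem hb
          (Set.mem_union_left _ (hcpproj (γ (u i))))
          (Set.mem_union_right _ (hcpproj (γ (u (i+1)))))
        calc dist (p i) (p (i+1)) ≤ Metric.diam (proj Z (γ (u i)) ∪ proj Z (γ (u (i+1)))) := hd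
        _ ≤ ρ (Metric.infDist (γ (u i)) Z) := hc
        _ ≤ ρ M := hρmono (u i) (hus i)
  -- sum the jumps
  have hsum : dist (p 0) (p n) ≤ (n:ℝ) * ρ M := by
    calc dist (p 0) (p n) ≤ ∑ i ∈ Finset.range n, dist (p i) (p (i+1)) :=
      dist_le_range_sum_dist p n
    _ ≤ ∑ _i ∈ Finset.range n, ρ M :=
      Finset.sum_le_sum (fun i hi => hjump i (Finset.mem_range.mp hi))
    _ = (n:ℝ) * ρ M := by rw [Finset.sum_const, Finset.card_range, nsmul_eq_mul]
  -- endpoint distances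
  have hd0 : dist (γ t₁) (p 0) ≤ θ := by
    have h1 : p 0 = cp (γ t₁) := by simp only [hpdef]; rw [hu0]
    rw [h1, ← (hcpspec (γ t₁)).2]
    exact hft₁
  have hdn : dist (p n) (γ t₂) ≤ θ := by
    have h1 : p n = cp (γ t₂) := by simp only [hpdef]; rw [hun]
    rw [dist_comm, h1, ← (hcpspec (γ t₂)).2]
    exact hft₂
  -- total distance bounds
  have hupp : dist (γ t₁) (γ t₂) ≤ θ + (n:ℝ)*ρ M + θ := by
    calc dist (γ t₁) (γ t₂) ≤ dist (γ t₁) (p 0) + dist (p 0) (p n) + dist (p n) (γ t₂) :=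
      dist_triangle4 _ _ _ _
    _ ≤ θ + (n:ℝ)*ρ M + θ := by linarith
  have hlow : (1/q) * T - Q ≤ dist (γ t₁) (γ t₂) := by
    have h1 := (hγ t₁ ht₁mem t₂ ht₂mem).1
    have h2 : |t₁ - t₂| = T := by
      rw [abs_sub_comm, abs_of_nonneg (by linarith)]
    rw [h2] at h1
    exact h1
  -- final arithmetic
  clear_value f M θ t₁ t₂ T h n u cp p
  have hA : T ≤ q*(2*θ + (n:ℝ)*ρ M + Q) := by
    have h2 : (1/q)*T ≤ 2*θ + (n:ℝ)*ρ M + Q := by linarith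
    have h3 : q * ((1/q)*T) = T := by field_simp
    calc T = q * ((1/q)*T) := h3.symm
    _ ≤ q*(2*θ + (n:ℝ)*ρ M + Q) := mul_le_mul_of_nonneg_left h2 hq0.le
  have hB : 4*q*((n:ℝ)*ρ M) ≤ T + h := by
    have h1 : (n:ℝ) * (4*q*ρ M) ≤ (n:ℝ) * h := by
      apply mul_le_mul_of_nonneg_left hh4 (by positivity)
    linarith
  have hhθ : h ≤ θ - Q := by
    have h1 : (q - 1) * h ≥ 0 := mul_nonneg (by linarith) hh0.le
    linarith [hqh]
  have hqθ : θ ≤ q*θ := by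
    have h1 : (q - 1) * θ ≥ 0 := mul_nonneg (by linarith) hθpos.le
    linarith
  -- T ≤ 3qθ + (4/3) q Q
  have hTbound : T ≤ 3*(q*θ) + (4/3)*(q*Q) := by linarith [hA, hB, hhθ, hqθ]
  have hu₀T : q*(u₀ - t₁) ≤ q*T := by
    apply mul_le_mul_of_nonneg_left _ hq0.le
    simp only [hTdef]; linarith
  have hfinal : M ≤ θ + q*T + Q := by linarith [hMle, hu₀T]
  have e1 : q*T ≤ 3*(q*(q*θ)) + (4/3)*(q*(q*Q)) := by
    have h1 := mul_le_mul_of_nonneg_left hTbound hq0.le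
    have h2 : q*(3*(q*θ) + (4/3)*(q*Q)) = 3*(q*(q*θ)) + (4/3)*(q*(q*Q)) := by ring
    linarith
  have e2 : q*(q*θ) = 4*(q^4*ρ M) + q^2*(Q+C+1) := by rw [hθdef]; ring
  have e3 : q*(q*Q) ≤ q^2*(Q+C+1) := by
    have h1 : (0:ℝ) ≤ q^2*(C+1) := mul_nonneg (sq_nonneg q) (by linarith)
    have h2 : q*(q*Q) + q^2*(C+1) = q^2*(Q+C+1) := by ring
    linarith
  have e4 : θ ≤ q*(q*θ) := by
    have h1 : (0:ℝ) ≤ (q^2 - 1) * θ := mul_nonneg (by linarith) hθpos.le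
    have h2 : (q^2 - 1) * θ = q*(q*θ) - θ := by ring
    linarith
  have e5 : Q ≤ q^2*(Q+C+1) := by
    have h1 := mul_le_mul_of_nonneg_right hq2 (by linarith : (0:ℝ) ≤ Q+C+1)
    linarith
  have e6 : M ≤ 16*(q^4*ρ M) + (19/3)*(q^2*(Q+C+1)) := by linarith [hfinal, e1, e2, e3, e4, e5]
  linarith [e6, hρM, hMK]

/-- For a contracting, strongly 1-Morse geodesic ray b and any r > 0, there is R > 0 such
that any continuous quasi-geodesic ray coming kappa-close to b past radius R has its
initial segment up to radius r in the Morse-gauge neighbourhood of b. -/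
theorem stmt_6 {X : Type*} [MetricSpace X] [ProperSpace X] (hX : IsGeodesicSpace X)
    (o : X) (b : ℝ → X) (hb : IsGeodesicRay o b)
    (ρb : ℝ → ℝ) (hρ : IsSublinear ρb) (hcon : IsContracting ρb (b '' Set.Ici 0))
    (mb : ℝ → ℝ → ℝ) (hM : IsStronglyOneMorse o (b '' Set.Ici 0) mb)
    (r : ℝ) (hr : 0 < r) :
    ∃ R > (0:ℝ), ∀ q, 1 ≤ q → ∀ Q, 0 ≤ Q →
      ∀ α : ℝ → X, ContinuousOn α (Set.Ici 0) → IsQGOn q Q α (Set.Ici 0) → α 0 = o →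
        mb q Q ≤ r / 2 →
        setDist (α '' Set.Ici 0) (b '' Set.Ici R) ≤ kappa ρb q Q →
        ∀ t ∈ Set.Icc 0 (firstTime o α r),
          Metric.infDist (α t) (b '' Set.Ici 0) ≤ mb q Q := by
  have hb0 : b 0 = o := hb.1
  have hZn : (b '' Set.Ici (0:ℝ)).Nonempty := ⟨b 0, 0, Set.self_mem_Ici, rfl⟩
  -- closedness of the ray image
  have hZc : IsClosed (b '' Set.Ici (0:ℝ)) := by
    haveI : CompleteSpace (Set.Ici (0:ℝ)) := (isClosed_Ici).completeSpace_coe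
    have hbiso : Isometry (fun t : Set.Ici (0:ℝ) => b t) := by
      apply Isometry.of_dist_eq
      intro x y
      rw [Subtype.dist_eq, Real.dist_eq]
      exact hb.2 x x.2 y y.2
    have h2 := hbiso.isClosedEmbedding.isClosed_range
    have h3 : Set.range (fun t : Set.Ici (0:ℝ) => b t) = b '' Set.Ici 0 := by
      ext x
      constructor
      · rintro ⟨⟨t, ht⟩, rfl⟩; exact ⟨t, ht, rfl⟩
      · rintro ⟨t, ht, rfl⟩; exact ⟨⟨t, ht⟩, rfl⟩
    rwa [h3] at h2
  -- constants
  set qm : ℝ := max 1 (r/2) with hqmdef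
  have hqm1 : (1:ℝ) ≤ qm := le_max_left _ _
  have hqm0 : (0:ℝ) < qm := lt_of_lt_of_le one_pos hqm1
  have hε : (0:ℝ) < 1/(44*qm^4) := by positivity
  -- threshold X₀ from sublinearity
  obtain ⟨X₀', hX₀'⟩ := (eventually_atTop).mp (hρ.tendsto.eventually_lt_const hε)
  set X₀ : ℝ := max X₀' 1 with hX₀def
  have hX₀1 : (1:ℝ) ≤ X₀ := le_max_right _ _
  have hX₀ : ∀ x ≥ X₀, 44*qm^4 * ρb x < x := by
    intro x hx
    have hx1 : (1:ℝ) ≤ x := le_trans hX₀1 hx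
    have hx0 : (0:ℝ) < x := lt_of_lt_of_le one_pos hx1
    have h1 : ρb x / x < 1/(44*qm^4) := hX₀' x (le_trans (le_max_left _ _) hx)
    rw [div_lt_div_iff₀ hx0 (by positivity)] at h1
    nlinarith
  set C₀ : ℝ := max (3*qm^2) (1 + X₀) with hC₀def
  have hC₀pos : (0:ℝ) < C₀ := lt_of_lt_of_le (by nlinarith) (le_max_left _ _)
  set K : ℝ := max X₀ (16*qm^2*(qm + (C₀+1) + 1)) with hKdef
  have hK1 : (1:ℝ) ≤ K := le_trans hX₀1 (le_max_left _ _)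
  -- constant sublinear function
  have hκ' : IsSublinear (fun _ : ℝ => K) := by
    refine ⟨fun x _ => hK1, monotoneOn_const, ?_, ?_⟩
    · exact concaveOn_const K (convex_Ici 0)
    · exact Tendsto.div_atTop tendsto_const_nhds tendsto_id
  obtain ⟨R₀, hR₀, hmorse⟩ := hM.morse (fun _ => K) hκ' r hr
  refine ⟨R₀ + C₀ + 2, by linarith, ?_⟩
  intro q hq Q hQ α hαc hαqg hα0 hgauge hclose
  have hq0 : (0:ℝ) < q := lt_of_lt_of_le one_pos hq
  have hqr : q ≤ r/2 := le_trans (le_trans (le_max_left q Q) (hM.gauge_ge q hq Q hQ)) hgauge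
  have hQr : Q ≤ r/2 := le_trans (le_trans (le_max_right q Q) (hM.gauge_ge q hq Q hQ)) hgauge
  have hqqm : q ≤ qm := le_trans hqr (le_max_right _ _)
  have hQqm : Q ≤ qm := le_trans hQr (le_max_right _ _)
  -- power bounds
  have hQ0 : (0:ℝ) ≤ Q := hQ
  have hq2m : q^2 ≤ qm^2 := by nlinarith [mul_le_mul hqqm hqqm hq0.le hqm0.le]
  have hQ2m : Q^2 ≤ qm^2 := by nlinarith [mul_le_mul hQqm hQqm hQ0 hqm0.le]
  have hq4m : q^4 ≤ qm^4 := by nlinarith [mul_le_mul hq2m hq2m (by positivity : (0:ℝ) ≤ q^2) (by positivity : (0:ℝ) ≤ qm^2)]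
  have hqm2 : qm ≤ qm^2 := by nlinarith
  have hqqm2 : q ≤ qm^2 := le_trans hqqm hqm2
  have hQqm2 : Q ≤ qm^2 := le_trans hQqm hqm2
  -- kappa bound
  have hkap : kappa ρb q Q ≤ C₀ := by
    rw [kappa]
    apply max_le
    · apply le_trans _ (le_max_left (3*qm^2) (1 + X₀))
      apply max_le (max_le (by linarith) (by linarith))
        (max_le (by linarith) (by linarith))
    · apply le_trans _ (le_max_right (3*qm^2) (1 + X₀))
      apply add_le_add le_rfl
      apply csInf_le ⟨0, fun y hy => hy.1.le⟩
      refine ⟨lt_of_lt_of_le one_pos hX₀1, fun x hx => ?_⟩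
      have hρx : (1:ℝ) ≤ ρb x := hρ.one_le x (by linarith [le_trans hX₀1 hx])
      have h2 := hX₀ x hx
      nlinarith [mul_le_mul_of_nonneg_right hq2m (by linarith : (0:ℝ) ≤ ρb x), hq4m, hqm1]
  -- extract a close pair of points
  have himn : (Set.image2 dist (α '' Set.Ici 0) (b '' Set.Ici (R₀+C₀+2))).Nonempty :=
    ⟨dist (α 0) (b (R₀+C₀+2)),
      Set.mem_image2_of_mem ⟨0, Set.self_mem_Ici, rfl⟩ ⟨R₀+C₀+2, Set.self_mem_Ici, rfl⟩⟩
  have hsd : setDist (α '' Set.Ici 0) (b '' Set.Ici (R₀+C₀+2)) < C₀ + 1 :=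
    lt_of_le_of_lt (le_trans hclose hkap) (lt_add_one C₀)
  obtain ⟨d, hd, hdlt⟩ := exists_lt_of_csInf_lt himn hsd
  obtain ⟨x, hx, y, hy, rfl⟩ := hd
  obtain ⟨s', hs', rfl⟩ := hx
  obtain ⟨u, hu, rfl⟩ := hy
  have hs'0 : (0:ℝ) ≤ s' := hs'
  have huR : R₀ + C₀ + 2 ≤ u := hu
  have hu0 : (0:ℝ) ≤ u := by linarith
  -- the endpoint α s' is far from o
  have hdob : dist o (b u) = u := by
    rw [← hb0, hb.2 0 Set.self_mem_Ici u (Set.mem_Ici.mpr hu0)]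
    rw [zero_sub, abs_neg, abs_of_nonneg hu0]
  have hfar : R₀ < dist o (α s') := by
    have h1 := dist_triangle o (α s') (b u)
    linarith [hdob, hdlt]
  -- apply chain_bound to α on [0, s']
  have hstart : Metric.infDist (α 0) (b '' Set.Ici 0) ≤ C₀ + 1 := by
    rw [hα0, ← hb0]
    have h1 : Metric.infDist (b 0) (b '' Set.Ici 0) ≤ dist (b 0) (b 0) :=
      Metric.infDist_le_dist_of_mem ⟨0, Set.self_mem_Ici, rfl⟩
    rw [dist_self] at h1
    linarith
  have hend : Metric.infDist (α s') (b '' Set.Ici 0) ≤ C₀ + 1 := by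
    have h1 : Metric.infDist (α s') (b '' Set.Ici 0) ≤ dist (α s') (b u) :=
      Metric.infDist_le_dist_of_mem ⟨u, Set.mem_Ici.mpr hu0, rfl⟩
    linarith
  have hX₀q : ∀ x ≥ X₀, 44*q^4 * ρb x < x := by
    intro x hx
    have hρx : (1:ℝ) ≤ ρb x := hρ.one_le x (by linarith [le_trans hX₀1 hx])
    have h2 := hX₀ x hx
    nlinarith [mul_le_mul_of_nonneg_right hq4m (by linarith : (0:ℝ) ≤ ρb x)]
  have hchain := chain_bound (b '' Set.Ici 0) hZc hZn ρb hρ hcon q Q hq hQ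
    α s' hs'0 (hαc.mono (fun x hx => hx.1)) (fun a ha c hc => hαqg a ha.1 c hc.1)
    (C₀+1) (by linarith) hstart hend X₀ hX₀1 hX₀q
  -- firstTime o α R₀ lies in [0, s']
  have hgc : ContinuousOn (fun t => dist o (α t)) (Set.Icc 0 s') :=
    (Continuous.dist continuous_const continuous_id).comp_continuousOn
      (hαc.mono (fun x hx => hx.1))
  have hR₀mem : R₀ ∈ Set.Icc (dist o (α 0)) (dist o (α s')) := by
    rw [hα0, dist_self]
    exact ⟨hR₀.le, hfar.le⟩
  obtain ⟨t0, ht0, hgt0⟩ := intermediate_value_Icc hs'0 hgc hR₀mem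
  have hne : {t : ℝ | 0 ≤ t ∧ dist o (α t) = R₀}.Nonempty := ⟨t0, ht0.1, hgt0⟩
  have hbdd : BddBelow {t : ℝ | 0 ≤ t ∧ dist o (α t) = R₀} := ⟨0, fun x hx => hx.1⟩
  have hft_le : firstTime o α R₀ ≤ s' := by
    rw [firstTime]
    exact le_trans (csInf_le hbdd ⟨ht0.1, hgt0⟩) ht0.2
  have hft_0 : 0 ≤ firstTime o α R₀ := by
    rw [firstTime]
    exact le_csInf hne (fun x hx => hx.1)
  -- morse hypothesis
  have hkey : Metric.infDist (α (firstTime o α R₀)) (b '' Set.Ici 0) ≤ K := by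
    apply le_trans (hchain _ ⟨hft_0, hft_le⟩)
    apply max_le (le_max_left _ _)
    apply le_trans _ (le_max_right X₀ (16*qm^2*(qm + (C₀+1) + 1)))
    have h1 : Q + (C₀+1) + 1 ≤ qm + (C₀+1) + 1 := by linarith
    have h2 : (0:ℝ) ≤ Q + (C₀+1) + 1 := by linarith
    nlinarith [mul_le_mul hq2m h1 h2 (by positivity : (0:ℝ) ≤ qm^2)]
  exact hmorse q hq Q hQ α hαc hαqg hα0 hgauge hkey
end

section
/- Let X be a proper geodesic metric space with basepoint o, and let b : [0,∞) → X be a geodesic ray based at o whose image is ρ_b-contracting for a sublinear function ρ_b. Let m_b : [1,∞)×[0,∞) → ℝ be a proper function with m_b(q,Q) ≥ max(q,Q) that is bounded on bounded sets. Then for every r > 0 there exists R > 0 such that every continuous (q,Q)-quasi-geodesic ray α based at o satisfying the implication (m_b(q,Q) ≤ R/2 ⟹ α|_R ⊆ N(Im b, m_b(q,Q))) also satisfies d(Im α, b([r,∞))) ≤ κ(ρ_b,q,Q). -/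
open Metric Set Filter

namespace Stmt7Aux

open Metric Set Filter

lemma ray_closed' {X : Type*} [MetricSpace X] {o : X} {b : ℝ → X}
    (hb0 : b 0 = o) (hbd : ∀ s ∈ Set.Ici (0:ℝ), ∀ t ∈ Set.Ici (0:ℝ), dist (b s) (b t) = |s - t|) :
    IsClosed (b '' Set.Ici 0) := by
  apply IsSeqClosed.isClosed
  intro x z hx hlim
  choose v hv hbv using hx
  have hvd : ∀ n, v n = dist o (x n) := by
    intro n
    rw [← hb0, ← hbv n, hbd 0 (Set.mem_Ici.2 le_rfl) (v n) (Set.mem_Ici.2 (hv n))]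
    simp [abs_of_nonneg (Set.mem_Ici.1 (hv n))]
  have hvtend : Tendsto v atTop (nhds (dist o z)) := by
    simp only [funext hvd]
    exact tendsto_const_nhds.dist hlim
  have hvnn : 0 ≤ dist o z := dist_nonneg
  refine ⟨dist o z, hvnn, ?_⟩
  have h1 : Tendsto (fun n => dist (b (v n)) (b (dist o z))) atTop (nhds 0) := by
    have : ∀ n, dist (b (v n)) (b (dist o z)) = |v n - dist o z| := fun n =>
      hbd (v n) (Set.mem_Ici.2 (hv n)) (dist o z) (Set.mem_Ici.2 hvnn)
    simp only [this]
    have := hvtend.sub_const (dist o z)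
    simpa using this.abs
  have h2 : Tendsto (fun n => dist (x n) (b (dist o z))) atTop (nhds 0) := by
    simpa only [hbv] using h1
  exact tendsto_nhds_unique ((tendsto_iff_dist_tendsto_zero).2 h2) hlim

lemma le_infDist_of {X : Type*} [MetricSpace X] (x : X) (s : Set X) (hs : s.Nonempty) (c : ℝ)
    (h : ∀ y ∈ s, c ≤ dist x y) : c ≤ infDist x s := by
  by_contra hc
  push_neg at hc
  obtain ⟨y, hy, hd⟩ := (Metric.infDist_lt_iff hs).1 hc
  exact absurd (h y hy) (not_le.2 hd)

end Stmt7Aux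

/-- For a contracting geodesic ray b and any r > 0, there is R > 0 such that any continuous
quasi-geodesic ray whose initial segment up to radius R lies in the mb-gauge neighbourhood
of b (whenever mb q Q <= R/2) comes kappa-close to b past radius r. -/
theorem stmt_7 {X : Type*} [MetricSpace X] [ProperSpace X] (hX : IsGeodesicSpace X)
    (o : X) (b : ℝ → X) (hb : IsGeodesicRay o b)
    (ρb : ℝ → ℝ) (hρ : IsSublinear ρb) (hcon : IsContracting ρb (b '' Set.Ici 0))
    (mb : ℝ → ℝ → ℝ)
    (hge : ∀ q, 1 ≤ q → ∀ Q, 0 ≤ Q → max q Q ≤ mb q Q)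
    (hbdd : ∀ M : ℝ, ∃ B : ℝ, ∀ q ∈ Set.Icc (1:ℝ) M, ∀ Q ∈ Set.Icc (0:ℝ) M, mb q Q ≤ B)
    (r : ℝ) (hr : 0 < r) :
    ∃ R > (0:ℝ), ∀ q, 1 ≤ q → ∀ Q, 0 ≤ Q →
      ∀ α : ℝ → X, ContinuousOn α (Set.Ici 0) → IsQGOn q Q α (Set.Ici 0) → α 0 = o →
        (mb q Q ≤ R / 2 →
          ∀ t ∈ Set.Icc 0 (firstTime o α R),
            Metric.infDist (α t) (b '' Set.Ici 0) ≤ mb q Q) →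
        setDist (α '' Set.Ici 0) (b '' Set.Ici r) ≤ kappa ρb q Q := by
  classical
  obtain ⟨hb0, hbd⟩ := hb
  have hZclosed : IsClosed (b '' Set.Ici 0) := Stmt7Aux.ray_closed' hb0 hbd
  have hZne : (b '' Set.Ici 0).Nonempty := ⟨o, ⟨0, Set.mem_Ici.2 le_rfl, hb0⟩⟩
  have hdistb : ∀ v : ℝ, 0 ≤ v → dist o (b v) = v := by
    intro v hv
    rw [← hb0, hbd 0 (Set.mem_Ici.2 le_rfl) v (Set.mem_Ici.2 hv)]
    simp [abs_of_nonneg hv]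
  set M : ℝ := max 1 (r/3) with hM
  clear_value M
  have hM1 : (1:ℝ) ≤ M := by rw [hM]; exact le_max_left _ _
  obtain ⟨B0, hB0⟩ := hbdd M
  set B : ℝ := max B0 1 with hBdef
  clear_value B
  have hB1 : (1:ℝ) ≤ B := by rw [hBdef]; exact le_max_right _ _
  have hρB1 : 1 ≤ ρb B := hρ.one_le B (by linarith)
  set r' : ℝ := 2*r + 1 with hr'def
  clear_value r'
  have hr'pos : 0 < r' := by rw [hr'def]; linarith
  set R : ℝ := 2*r' + 4*B + 2*(ρb B) + 2*M + 2 with hRdef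
  clear_value R
  have hRpos : 0 < R := by rw [hRdef]; linarith
  refine ⟨R, hRpos, ?_⟩
  intro q hq Q hQ α hαc hαqg hα0 hαnbhd
  have hqpos : 0 < q := lt_of_lt_of_le one_pos hq
  -- the trivial bound setDist ≤ r
  have hsetle : setDist (α '' Set.Ici 0) (b '' Set.Ici r) ≤ r := by
    have hmem : dist (α 0) (b r) ∈ Set.image2 dist (α '' Set.Ici 0) (b '' Set.Ici r) :=
      Set.mem_image2_of_mem (Set.mem_image_of_mem α (Set.mem_Ici.2 le_rfl))
        (Set.mem_image_of_mem b (Set.mem_Ici.2 le_rfl))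
    have hlb : BddBelow (Set.image2 dist (α '' Set.Ici 0) (b '' Set.Ici r)) := by
      refine ⟨0, ?_⟩
      rintro z ⟨a, -, c, -, rfl⟩
      exact dist_nonneg
    have hor : dist (α 0) (b r) = r := by rw [hα0, hdistb r hr.le]
    calc setDist (α '' Set.Ici 0) (b '' Set.Ici r) ≤ dist (α 0) (b r) := csInf_le hlb hmem
    _ = r := hor
  by_cases hbig : r ≤ kappa ρb q Q
  · exact hsetle.trans hbig
  push_neg at hbig
  set κ := kappa ρb q Q with hκdef
  clear_value κ
  have hκ3q : 3*q ≤ κ := by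
    rw [hκdef]; unfold kappa
    exact le_max_of_le_left (le_max_of_le_left (le_max_left _ _))
  have hκ3Q : 3*Q ≤ κ := by
    rw [hκdef]; unfold kappa
    exact le_max_of_le_left (le_max_of_le_right (le_max_left _ _))
  have hκS : 1 + sInf {S : ℝ | 0 < S ∧ ∀ x ≥ S, 3*q^2 * ρb x < x} ≤ κ := by
    rw [hκdef]; unfold kappa
    exact le_max_right _ _
  have hκ3 : (3:ℝ) ≤ κ := by linarith
  have hqM : q ≤ M := by
    have h1 : q ≤ r/3 := by linarith
    rw [hM]; exact h1.trans (le_max_right _ _)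
  have hQM : Q ≤ M := by
    have h1 : Q ≤ r/3 := by linarith
    rw [hM]; exact h1.trans (le_max_right _ _)
  have hmbB : mb q Q ≤ B := by rw [hBdef]; exact (hB0 q ⟨hq, hqM⟩ Q ⟨hQ, hQM⟩).trans (le_max_left _ _)
  have hnb0 : ∀ t ∈ Set.Icc 0 (firstTime o α R),
      Metric.infDist (α t) (b '' Set.Ici 0) ≤ mb q Q := by
    apply hαnbhd
    rw [hRdef]; linarith
  -- threshold property
  have hSne : {S : ℝ | 0 < S ∧ ∀ x ≥ S, 3*q^2 * ρb x < x}.Nonempty := by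
    have hε : (0:ℝ) < 1/(3*q^2+1) := by positivity
    have hev : ∀ᶠ x in atTop, ρb x / x < 1/(3*q^2+1) := hρ.tendsto.eventually_lt_const hε
    obtain ⟨x0, hx0⟩ := eventually_atTop.1 hev
    refine ⟨max x0 1, lt_of_lt_of_le one_pos (le_max_right _ _), ?_⟩
    intro x hx
    have hx1 : (1:ℝ) ≤ x := le_trans (le_max_right _ _) hx
    have hxpos : (0:ℝ) < x := lt_of_lt_of_le one_pos hx1
    have hlt := hx0 x (le_trans (le_max_left _ _) hx)
    have hcross : ρb x * (3*q^2+1) < 1 * x := (div_lt_div_iff₀ hxpos (by positivity)).1 hlt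
    have hρ1 : 1 ≤ ρb x := hρ.one_le x hxpos.le
    nlinarith
  have hSbdd : BddBelow {S : ℝ | 0 < S ∧ ∀ x ≥ S, 3*q^2 * ρb x < x} :=
    ⟨0, fun y hy => hy.1.le⟩
  have hthresh : ∀ d, κ ≤ d → 3*q^2 * ρb d < d := by
    intro d hd
    have h1 : sInf {S : ℝ | 0 < S ∧ ∀ x ≥ S, 3*q^2 * ρb x < x} < d := by linarith
    obtain ⟨S1, hS1, hS1d⟩ := exists_lt_of_csInf_lt hSne h1
    exact hS1.2 d hS1d.le
  -- contradiction setup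
  by_contra hcon2
  push_neg at hcon2
  have hfar : ∀ t, 0 ≤ t → ∀ v, r ≤ v → κ ≤ dist (α t) (b v) := by
    intro t ht v hv
    have hmem : dist (α t) (b v) ∈ Set.image2 dist (α '' Set.Ici 0) (b '' Set.Ici r) :=
      Set.mem_image2_of_mem (Set.mem_image_of_mem α ht) (Set.mem_image_of_mem b hv)
    have hlb : BddBelow (Set.image2 dist (α '' Set.Ici 0) (b '' Set.Ici r)) := by
      refine ⟨0, ?_⟩
      rintro z ⟨a, -, c, -, rfl⟩
      exact dist_nonneg
    exact le_of_lt (lt_of_lt_of_le hcon2 (csInf_le hlb hmem))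
  have hdc : ContinuousOn (fun t => dist o (α t)) (Set.Ici 0) := (continuous_const.dist continuous_id).comp_continuousOn hαc
  -- the first time T at radius R
  set A : Set ℝ := {t : ℝ | 0 ≤ t ∧ dist o (α t) = R} with hAdef
  have hAT : A = Set.Ici 0 ∩ (fun t => dist o (α t)) ⁻¹' {R} := by
    ext t; simp [hAdef, Set.mem_Ici]
  have hAclosed : IsClosed A := by
    rw [hAT]
    exact hdc.preimage_isClosed_of_isClosed isClosed_Ici isClosed_singleton
  have hAlb : BddBelow A := ⟨0, fun t ht => ht.1⟩
  have hAne : A.Nonempty := by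
    have hT0 : (0:ℝ) ≤ q*(R+Q) := by positivity
    have hlow := (hαqg 0 (Set.mem_Ici.2 le_rfl) (q*(R+Q)) (Set.mem_Ici.2 hT0)).1
    rw [hα0] at hlow
    have habs : |0 - q*(R+Q)| = q*(R+Q) := by
      rw [zero_sub, abs_neg, abs_of_nonneg hT0]
    rw [habs] at hlow
    have h1q : (1/q)*(q*(R+Q)) = R + Q := by field_simp
    have hRle : R ≤ dist o (α (q*(R+Q))) := by rw [h1q] at hlow; linarith
    have h0 : dist o (α 0) = 0 := by rw [hα0]; simp
    have hmemIcc : R ∈ Set.Icc (dist o (α 0)) (dist o (α (q*(R+Q)))) := by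
      rw [h0]; exact ⟨hRpos.le, hRle⟩
    obtain ⟨t, ht, htR⟩ := intermediate_value_Icc hT0 (hdc.mono Set.Icc_subset_Ici_self) hmemIcc
    exact ⟨t, ht.1, htR⟩
  set T := firstTime o α R with hTdef
  have hTmem : T ∈ A := by
    rw [hTdef]
    exact hAclosed.csInf_mem hAne hAlb
  obtain ⟨hTnn, hTR⟩ := hTmem
  clear_value T
  have hnb : ∀ t ∈ Set.Icc 0 T, Metric.infDist (α t) (b '' Set.Ici 0) ≤ B :=
    fun t ht => (hnb0 t ht).trans hmbB
  have hTle : T ≤ q*(R+Q) := by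
    have hlow := (hαqg 0 (Set.mem_Ici.2 le_rfl) T (Set.mem_Ici.2 hTnn)).1
    rw [hα0, hTR] at hlow
    have habs : |0 - T| = T := by rw [zero_sub, abs_neg, abs_of_nonneg hTnn]
    rw [habs] at hlow
    have h2 : (1/q)*T ≤ R + Q := by linarith
    calc T = q * ((1/q)*T) := by field_simp
    _ ≤ q*(R+Q) := by
        apply mul_le_mul_of_nonneg_left h2 hqpos.le
  have hr'R : r' ≤ R := by rw [hRdef]; linarith
  -- last time t1 at radius r'
  set A1 : Set ℝ := Set.Icc 0 T ∩ (fun t => dist o (α t)) ⁻¹' {r'} with hA1def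
  have hA1closed : IsClosed A1 :=
    (hdc.mono Set.Icc_subset_Ici_self).preimage_isClosed_of_isClosed isClosed_Icc
      isClosed_singleton
  have hA1ub : BddAbove A1 := ⟨T, fun t ht => ht.1.2⟩
  have hA1ne : A1.Nonempty := by
    have h0 : dist o (α 0) = 0 := by rw [hα0]; simp
    have hmemIcc : r' ∈ Set.Icc (dist o (α 0)) (dist o (α T)) := by
      rw [h0, hTR]; exact ⟨hr'pos.le, hr'R⟩
    obtain ⟨t, ht, htr⟩ := intermediate_value_Icc hTnn (hdc.mono Set.Icc_subset_Ici_self) hmemIcc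
    exact ⟨t, ht, htr⟩
  set t1 := sSup A1 with ht1def
  have ht1mem : t1 ∈ A1 := hA1closed.csSup_mem hA1ne hA1ub
  clear_value t1
  have ht1nn : 0 ≤ t1 := ht1mem.1.1
  have ht1T : t1 ≤ T := ht1mem.1.2
  have ht1r' : dist o (α t1) = r' := ht1mem.2
  have hGe : ∀ t ∈ Set.Icc t1 T, r' ≤ dist o (α t) := by
    rintro t ⟨htl, htr⟩
    by_contra hlt
    push_neg at hlt
    have h0t : 0 ≤ t := ht1nn.trans htl
    have hmemIcc : r' ∈ Set.Icc (dist o (α t)) (dist o (α T)) := by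
      rw [hTR]; exact ⟨hlt.le, hr'R⟩
    obtain ⟨t', ht', ht'r⟩ := intermediate_value_Icc htr
      (hdc.mono (fun x hx => Set.mem_Ici.2 (h0t.trans hx.1))) hmemIcc
    have ht'A1 : t' ∈ A1 := ⟨⟨h0t.trans ht'.1, ht'.2⟩, ht'r⟩
    have ht'le : t' ≤ t1 := by rw [ht1def]; exact le_csSup hA1ub ht'A1
    have htgt : t1 < t := by
      rcases lt_or_eq_of_le htl with h | h
      · exact h
      · rw [← h, ht1r'] at hlt; exact absurd hlt (lt_irrefl _)
    linarith [ht'.1]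
  have hfarZ : ∀ t ∈ Set.Icc t1 T, κ ≤ Metric.infDist (α t) (b '' Set.Ici 0) := by
    intro t ht
    apply Stmt7Aux.le_infDist_of _ _ hZne
    rintro y ⟨v, hv, rfl⟩
    by_cases hvr : r ≤ v
    · exact hfar t (ht1nn.trans ht.1) v hvr
    · push_neg at hvr
      have h1 := dist_triangle o (b v) (α t)
      have h2 : dist o (b v) = v := hdistb v (Set.mem_Ici.1 hv)
      have h3 : r' ≤ dist o (α t) := hGe t ht
      have h4 : dist (b v) (α t) = dist (α t) (b v) := dist_comm _ _
      rw [hr'def] at h3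
      rw [h2, h4] at h1
      linarith
  -- projections
  have hproj : ∀ x : X, ∃ u, 0 ≤ u ∧ b u ∈ proj (b '' Set.Ici 0) x := by
    intro x
    obtain ⟨z, hz, hdz⟩ := hZclosed.exists_infDist_eq_dist hZne x
    obtain ⟨u, hu, rfl⟩ := hz
    exact ⟨u, hu, ⟨⟨u, hu, rfl⟩, hdz.symm⟩⟩
  have hcontr : ∀ (x y : X) (u u' : ℝ), 0 ≤ u → 0 ≤ u' →
      dist x y ≤ Metric.infDist x (b '' Set.Ici 0) →
      b u ∈ proj (b '' Set.Ici 0) x → b u' ∈ proj (b '' Set.Ici 0) y →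
      |u - u'| ≤ ρb (Metric.infDist x (b '' Set.Ici 0)) := by
    intro x y u u' hu hu' hxy hpu hpu'
    have hdiam := hcon x y hxy
    have hsub : proj (b '' Set.Ici 0) x ∪ proj (b '' Set.Ici 0) y ⊆
        closedBall x (Metric.infDist x (b '' Set.Ici 0)) ∪
        closedBall y (Metric.infDist y (b '' Set.Ici 0)) := by
      rintro z (⟨hz1, hz2⟩ | ⟨hz1, hz2⟩)
      · left; rw [mem_closedBall, dist_comm]; exact hz2.le
      · right; rw [mem_closedBall, dist_comm]; exact hz2.le
    have hbded : Bornology.IsBounded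
        (proj (b '' Set.Ici 0) x ∪ proj (b '' Set.Ici 0) y) :=
      ((isBounded_closedBall).union (isBounded_closedBall)).subset hsub
    have hdd := dist_le_diam_of_mem hbded (Set.mem_union_left _ hpu)
      (Set.mem_union_right _ hpu')
    rw [hbd u (Set.mem_Ici.2 hu) u' (Set.mem_Ici.2 hu')] at hdd
    linarith
  obtain ⟨u0, hu0nn, hu0p⟩ := hproj (α t1)
  have ht1Icc : t1 ∈ Set.Icc 0 T := ⟨ht1nn, ht1T⟩
  have hu0le : u0 ≤ r' + B := by
    have h1 : dist (α t1) (b u0) ≤ B := by rw [hu0p.2]; exact hnb t1 ht1Icc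
    have h2 := dist_triangle o (α t1) (b u0)
    have h3 : dist o (b u0) = u0 := hdistb u0 hu0nn
    rw [ht1r', h3] at h2
    linarith
  set c : ℝ := 2/q with hcdef
  have hcpos : 0 < c := by rw [hcdef]; positivity
  clear_value c
  -- the projection walk
  have main : ∀ n : ℕ, ∃ s u : ℝ, s ∈ Set.Icc t1 T ∧ 0 ≤ u ∧
      b u ∈ proj (b '' Set.Ici 0) (α s) ∧ u ≤ u0 + (s - t1)/(2*q) ∧
      (t1 + n*c ≤ s ∨ dist (α s) (α T) < Metric.infDist (α s) (b '' Set.Ici 0)) := by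
    intro n
    induction n with
    | zero =>
      exact ⟨t1, u0, ⟨le_rfl, ht1T⟩, hu0nn, hu0p, by simp [hqpos.ne'], Or.inl (by simp)⟩
    | succ n ih =>
      obtain ⟨s, u, hsmem, hunn, hupj, hule, hdisj⟩ := ih
      by_cases hterm : dist (α s) (α T) < Metric.infDist (α s) (b '' Set.Ici 0)
      · exact ⟨s, u, hsmem, hunn, hupj, hule, Or.inr hterm⟩
      push_neg at hterm
      have hstep : t1 + n*c ≤ s := hdisj.resolve_right (not_lt.2 hterm)
      set d := Metric.infDist (α s) (b '' Set.Ici 0) with hddef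
      clear_value d
      have hκd : κ ≤ d := by rw [hddef]; exact hfarZ s hsmem
      have hdB : d ≤ B := by rw [hddef]; exact hnb s ⟨ht1nn.trans hsmem.1, hsmem.2⟩
      have hs0 : 0 ≤ s := ht1nn.trans hsmem.1
      have hg : ContinuousOn (fun t => dist (α s) (α t)) (Set.Icc s T) :=
        (continuous_const.dist continuous_id).comp_continuousOn
          (hαc.mono (fun x hx => Set.mem_Ici.2 (hs0.trans hx.1)))
      have hdnn : 0 ≤ d := by rw [hddef]; exact Metric.infDist_nonneg
      have hmemIcc : d ∈ Set.Icc (dist (α s) (α s)) (dist (α s) (α T)) := by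
        rw [dist_self]; exact ⟨hdnn, hterm⟩
      obtain ⟨s', hs'mem, hs'd0⟩ := intermediate_value_Icc hsmem.2 hg hmemIcc
      have hs'd : dist (α s) (α s') = d := hs'd0
      have hs'0 : 0 ≤ s' := hs0.trans hs'mem.1
      have hqg := hαqg s (Set.mem_Ici.2 hs0) s' (Set.mem_Ici.2 hs'0)
      have habs : |s - s'| = s' - s := by
        rw [abs_sub_comm]; exact abs_of_nonneg (by linarith [hs'mem.1])
      rw [habs, hs'd] at hqg
      obtain ⟨hqgl, hqgu⟩ := hqg
      have hQd : 3*Q ≤ d := le_trans hκ3Q hκd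
      have h3d : (3:ℝ) ≤ d := le_trans hκ3 hκd
      have hstepge : c ≤ s' - s := by
        rw [hcdef, div_le_iff₀ hqpos]
        linarith
      obtain ⟨u', hu'nn, hu'p⟩ := hproj (α s')
      have hcd : |u - u'| ≤ ρb d := by
        rw [hddef]
        exact hcontr (α s) (α s') u u' hunn hu'nn (le_of_eq (hs'd.trans hddef)) hupj hu'p
      have hρd : 3*q^2 * ρb d < d := hthresh d hκd
      have hρdnn : 0 ≤ ρb d := le_trans zero_le_one (hρ.one_le d hdnn)
      -- 2q * ρb d ≤ s' - s
      have hA : 2*(q^2*(ρb d)) ≤ q*(s' - s) := by linarith [hρd, hqgu, hQd]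
      have h2q : 2*q*(ρb d) ≤ s' - s := by
        have hqq : q*(2*q*(ρb d)) ≤ q*(s' - s) := by linarith [hA]
        exact (mul_le_mul_iff_right₀ hqpos).1 hqq
      have hup' : u' ≤ u0 + (s' - t1)/(2*q) := by
        have h1 : u' - u ≤ |u - u'| := by rw [abs_sub_comm]; exact le_abs_self _
        have h2 : ρb d ≤ (s' - s)/(2*q) := by
          rw [le_div_iff₀ (by positivity)]; linarith
        have h3 : (s - t1)/(2*q) + (s' - s)/(2*q) = (s' - t1)/(2*q) := by ring
        linarith
      refine ⟨s', u', ⟨hsmem.1.trans hs'mem.1, hs'mem.2⟩, hu'nn, hu'p, hup', Or.inl ?_⟩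
      push_cast
      linarith
  -- conclude
  obtain ⟨n, hn⟩ := exists_nat_gt ((T - t1)/c)
  obtain ⟨s, u, hsmem, hunn, hupj, hule, hdisj⟩ := main n
  have hterm : dist (α s) (α T) < Metric.infDist (α s) (b '' Set.Ici 0) := by
    rcases hdisj with h | h
    · exfalso
      have h1 : (n:ℝ)*c ≤ T - t1 := by linarith [hsmem.2]
      have h2 : (n:ℝ) ≤ (T - t1)/c := by rw [le_div_iff₀ hcpos]; linarith
      linarith
    · exact h
  have hκd : κ ≤ Metric.infDist (α s) (b '' Set.Ici 0) := hfarZ s hsmem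
  have hdB : Metric.infDist (α s) (b '' Set.Ici 0) ≤ B := hnb s ⟨ht1nn.trans hsmem.1, hsmem.2⟩
  obtain ⟨u', hu'nn, hu'p⟩ := hproj (α T)
  have hcd : |u - u'| ≤ ρb (Metric.infDist (α s) (b '' Set.Ici 0)) :=
    hcontr (α s) (α T) u u' hunn hu'nn hterm.le hupj hu'p
  have hρdB : ρb (Metric.infDist (α s) (b '' Set.Ici 0)) ≤ ρb B :=
    hρ.mono (Set.mem_Ici.2 Metric.infDist_nonneg) (Set.mem_Ici.2 (by linarith)) hdB
  have hu'R : R - B ≤ u' := by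
    have h1 : dist (α T) (b u') ≤ B := by rw [hu'p.2]; exact hnb T ⟨hTnn, le_rfl⟩
    have h2 := dist_triangle o (b u') (α T)
    have h3 : dist o (b u') = u' := hdistb u' hu'nn
    have h4 : dist (b u') (α T) = dist (α T) (b u') := dist_comm _ _
    rw [hTR, h3, h4] at h2
    linarith
  have hub : u' ≤ u + ρb B := by
    have h1 : u' - u ≤ |u - u'| := by rw [abs_sub_comm]; exact le_abs_self _
    linarith
  have hfrac : (s - t1)/(2*q) ≤ (R+Q)/2 := by
    rw [div_le_div_iff₀ (by positivity) two_pos]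
    have h1 : s ≤ q*(R+Q) := hsmem.2.trans hTle
    linarith [ht1nn]
  rw [hRdef] at hu'R
  linarith [hu0le, hQM, hule, hub]
end

section
/- Let X be a proper geodesic metric space with basepoint o, let b : [0,∞) → X be a geodesic ray based at o whose image is ρ-contracting for a sublinear function ρ, and let α be a continuous (q,Q)-quasi-geodesic ray based at o. Suppose r > 0 and R > 0 satisfy R > max(r,1), R − 4√R > r, and ρ(√R/2) < √R/2, and suppose m is a constant with max(q,Q) ≤ m ≤ √R/2 such that α|_R ⊆ N(Im b, m). Then there exists t ∈ [t_r, t_R] with d(α(t), Im b) ≤ κ(ρ,q,Q). -/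
open Metric Set Filter

/-- If the initial segment of a quasi-geodesic ray up to radius R lies in the m-neighbourhood
of a contracting geodesic ray b with m at most sqrt(R)/2, and R is large relative to r, then
some point of the ray between times t_r and t_R is kappa-close to b. -/
theorem stmt_8 {X : Type*} [MetricSpace X] [ProperSpace X] (hX : IsGeodesicSpace X)
    (o : X) (b : ℝ → X) (hb : IsGeodesicRay o b)
    (ρ : ℝ → ℝ) (hρ : IsSublinear ρ) (hcon : IsContracting ρ (b '' Set.Ici 0))
    (q Q : ℝ) (hq : 1 ≤ q) (hQ : 0 ≤ Q)
    (α : ℝ → X) (hαc : ContinuousOn α (Set.Ici 0))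
    (hαq : IsQGOn q Q α (Set.Ici 0)) (hα0 : α 0 = o)
    (r R : ℝ) (hr : 0 < r) (hR : 0 < R)
    (h1 : max r 1 < R) (h2 : r < R - 4 * Real.sqrt R)
    (h3 : ρ (Real.sqrt R / 2) < Real.sqrt R / 2)
    (m : ℝ) (hm1 : max q Q ≤ m) (hm2 : m ≤ Real.sqrt R / 2)
    (hnbhd : ∀ t ∈ Set.Icc 0 (firstTime o α R),
      Metric.infDist (α t) (b '' Set.Ici 0) ≤ m) :
    ∃ t ∈ Set.Icc (firstTime o α r) (firstTime o α R),
      Metric.infDist (α t) (b '' Set.Ici 0) ≤ kappa ρ q Q := by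
  by_contra hcontra
  push_neg at hcontra
  set Z : Set X := b '' Set.Ici 0 with hZdef
  set tr := firstTime o α r with htrdef
  set tR := firstTime o α R with htRdef
  have hq0 : (0:ℝ) < q := lt_of_lt_of_le one_pos hq
  have hR1 : (1:ℝ) < R := lt_of_le_of_lt (le_max_right r 1) h1
  have hrR : r < R := lt_of_le_of_lt (le_max_left r 1) h1
  have hsR : 0 < Real.sqrt R := Real.sqrt_pos.mpr hR
  set sR := Real.sqrt R with hsRdef
  have hQm : Q ≤ m := le_trans (le_max_right q Q) hm1
  have hQsR : Q ≤ sR / 2 := hQm.trans hm2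
  -- kappa facts
  set κ := kappa ρ q Q with hκdef
  have hκq : 3*q ≤ κ :=
    le_trans (le_trans (le_max_left _ _) (le_max_left _ _)) (le_max_left _ _)
  have hκq2 : 3*q^2 ≤ κ :=
    le_trans (le_trans (le_max_right _ _) (le_max_left _ _)) (le_max_left _ _)
  have hκQ : 3*Q ≤ κ :=
    le_trans (le_trans (le_max_left _ _) (le_max_right _ _)) (le_max_left _ _)
  have hκpos : 0 < κ := lt_of_lt_of_le (by linarith) hκq
  -- the set S in kappa is nonempty
  have hSne : {R₀ : ℝ | 0 < R₀ ∧ ∀ r' ≥ R₀, 3*q^2 * ρ r' < r'}.Nonempty := by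
    have hε : (0:ℝ) < 1/(3*q^2) := by positivity
    obtain ⟨a, ha⟩ := Filter.eventually_atTop.mp (hρ.tendsto.eventually_lt_const hε)
    refine ⟨max a 1, lt_of_lt_of_le one_pos (le_max_right a 1), ?_⟩
    intro r' hr'
    have hr1 : (1:ℝ) ≤ r' := le_trans (le_max_right a 1) hr'
    have hr0 : (0:ℝ) < r' := lt_of_lt_of_le one_pos hr1
    have := ha r' (le_trans (le_max_left a 1) hr')
    rw [div_lt_iff₀ hr0] at this
    have h3q2 : (0:ℝ) < 3*q^2 := by positivity
    calc 3*q^2 * ρ r' = (3*q^2) * ρ r' := by ring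
      _ < (3*q^2) * (1/(3*q^2) * r') := by
          apply mul_lt_mul_of_pos_left _ h3q2
          calc ρ r' < 1/(3*q^2) * r' := this
            _ = 1/(3*q^2) * r' := rfl
      _ = r' := by field_simp
  have hκkey : ∀ d : ℝ, κ < d → 3*q^2 * ρ d < d := by
    intro d hd
    have hS0 : 0 ≤ sInf {R₀ : ℝ | 0 < R₀ ∧ ∀ r' ≥ R₀, 3*q^2 * ρ r' < r'} :=
      Real.sInf_nonneg (fun x hx => le_of_lt hx.1)
    have hSκ : 1 + sInf {R₀ : ℝ | 0 < R₀ ∧ ∀ r' ≥ R₀, 3*q^2 * ρ r' < r'} ≤ κ :=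
      le_max_right _ _
    obtain ⟨R₀, hR₀S, hR₀d⟩ := exists_lt_of_csInf_lt hSne (by linarith :
      sInf {R₀ : ℝ | 0 < R₀ ∧ ∀ r' ≥ R₀, 3*q^2 * ρ r' < r'} < d)
    exact hR₀S.2 d (le_of_lt hR₀d)
  -- Z is closed and nonempty; projections exist
  have hZne : Z.Nonempty := ⟨o, 0, Set.self_mem_Ici, hb.1⟩
  have hZclosed : IsClosed Z := by
    have hbiso : Isometry (fun s : Set.Ici (0:ℝ) => b (s:ℝ)) := by
      apply Isometry.of_dist_eq
      intro a c
      rw [hb.2 a a.2 c c.2, Subtype.dist_eq, Real.dist_eq]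
    haveI : CompleteSpace (Set.Ici (0:ℝ)) := isClosed_Ici.completeSpace_coe
    have hcl : IsClosed (Set.range (fun s : Set.Ici (0:ℝ) => b (s:ℝ))) :=
      hbiso.isClosedEmbedding.isClosed_range
    have : Z = Set.range (fun s : Set.Ici (0:ℝ) => b (s:ℝ)) := Set.image_eq_range _ _
    rw [this]; exact hcl
  have hproj : ∀ x : X, ∃ z ∈ Z, Metric.infDist x Z = dist x z := fun x =>
    hZclosed.exists_infDist_eq_dist hZne x
  choose p hpZ hpd using hproj
  have hpmem : ∀ x : X, p x ∈ proj Z x := fun x => ⟨hpZ x, (hpd x).symm⟩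
  -- the contraction jump estimate
  have hjump : ∀ x y : X, dist x y ≤ Metric.infDist x Z →
      dist (p x) (p y) ≤ ρ (Metric.infDist x Z) := by
    intro x y hxy
    have hb1 : proj Z x ⊆ Metric.closedBall x (Metric.infDist x Z) := fun z hz => by
      rw [Metric.mem_closedBall, dist_comm]; exact hz.2.le
    have hb2 : proj Z y ⊆ Metric.closedBall y (Metric.infDist y Z) := fun z hz => by
      rw [Metric.mem_closedBall, dist_comm]; exact hz.2.le
    have hbd : Bornology.IsBounded (proj Z x ∪ proj Z y) :=
      ((Metric.isBounded_closedBall).subset hb1).union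
        ((Metric.isBounded_closedBall).subset hb2)
    exact le_trans
      (Metric.dist_le_diam_of_mem hbd (Or.inl (hpmem x)) (Or.inr (hpmem y)))
      (hcon x y hxy)
  -- distance function along α
  have hg : ContinuousOn (fun t => dist o (α t)) (Set.Ici 0) :=
    (continuous_const.dist continuous_id).comp_continuousOn hαc
  have hreach : ∀ c : ℝ, 0 ≤ c → c ≤ R → ∃ t, 0 ≤ t ∧ dist o (α t) = c := by
    intro c hc0 hcR
    have hT0 : (0:ℝ) ≤ q*(R+Q) := by positivity
    have hTbig : R ≤ dist o (α (q*(R+Q))) := by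
      have hlow := (hαq 0 Set.self_mem_Ici (q*(R+Q)) (Set.mem_Ici.mpr hT0)).1
      rw [hα0] at hlow
      have habs : |0 - q*(R+Q)| = q*(R+Q) := by
        rw [zero_sub, abs_neg, abs_of_nonneg hT0]
      rw [habs] at hlow
      have hdiv : (1/q)*(q*(R+Q)) = R + Q := by field_simp
      rw [hdiv] at hlow
      linarith only [hlow]
    have hmem : c ∈ Set.Icc (dist o (α 0)) (dist o (α (q*(R+Q)))) := by
      rw [hα0, dist_self]
      exact ⟨hc0, le_trans hcR hTbig⟩
    obtain ⟨t, ht, htv⟩ := intermediate_value_Icc hT0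
      (hg.mono (Set.Icc_subset_Ici_self)) hmem
    exact ⟨t, ht.1, htv⟩
  have hsetfact : ∀ c : ℝ, 0 ≤ c → c ≤ R →
      (0 ≤ firstTime o α c ∧ dist o (α (firstTime o α c)) = c) := by
    intro c hc0 hcR
    have hne : {t : ℝ | 0 ≤ t ∧ dist o (α t) = c}.Nonempty := hreach c hc0 hcR
    have hcl : IsClosed {t : ℝ | 0 ≤ t ∧ dist o (α t) = c} := by
      have heq : {t : ℝ | 0 ≤ t ∧ dist o (α t) = c} =
          Set.Ici 0 ∩ (fun t => dist o (α t)) ⁻¹' {c} := by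
        ext x; simp [Set.mem_Ici]
      rw [heq]
      exact hg.preimage_isClosed_of_isClosed isClosed_Ici isClosed_singleton
    have hbdd : BddBelow {t : ℝ | 0 ≤ t ∧ dist o (α t) = c} := ⟨0, fun x hx => hx.1⟩
    exact hcl.csInf_mem hne hbdd
  have htrm := hsetfact r hr.le hrR.le
  have htRm := hsetfact R hR.le (le_refl R)
  have htr0 : 0 ≤ tr := htrm.1
  have htR0 : 0 ≤ tR := htRm.1
  have htrv : dist o (α tr) = r := htrm.2
  have htRv : dist o (α tR) = R := htRm.2
  -- tr ≤ tR
  have hle : tr ≤ tR := by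
    have hmem : r ∈ Set.Icc (dist o (α 0)) (dist o (α tR)) := by
      rw [hα0, dist_self, htRv]; exact ⟨hr.le, hrR.le⟩
    obtain ⟨t, ht, htv⟩ := intermediate_value_Icc htR0
      (hg.mono (Set.Icc_subset_Ici_self)) hmem
    exact le_trans (csInf_le ⟨0, fun x hx => hx.1⟩ ⟨ht.1, htv⟩) ht.2
  -- distance to Z is at most sR/2 on [0, tR]
  have hfm : ∀ t : ℝ, 0 ≤ t → t ≤ tR → Metric.infDist (α t) Z ≤ sR/2 := by
    intro t h0 h1'
    exact le_trans (hnbhd t ⟨h0, h1'⟩) hm2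
  -- chain construction
  obtain ⟨T, hT0, hTs⟩ : ∃ T : ℕ → ℝ, T 0 = tr ∧
      ∀ n, T (n+1) = min (T n + (Metric.infDist (α (T n)) Z - Q)/q) tR :=
    ⟨fun n => Nat.rec tr
      (fun _ t => min (t + (Metric.infDist (α t) Z - Q)/q) tR) n, rfl, fun n => rfl⟩
  have key : ∀ n : ℕ, (tr ≤ T n ∧ T n ≤ tR) ∧
      (dist (p (α tr)) (p (α (T n))) ≤ (T n - tr)/(2*q) ∨
        (T n = tR ∧ dist (p (α tr)) (p (α (T n))) ≤ (T n - tr)/(2*q) + sR/2)) ∧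
      (tr + 2*(n:ℝ) ≤ T n ∨ T n = tR) := by
    intro n
    induction n with
    | zero =>
      refine ⟨⟨le_of_eq hT0.symm, hT0 ▸ hle⟩, Or.inl ?_, Or.inl ?_⟩
      · rw [hT0]; simp [dist_self]
      · rw [hT0]; norm_num
    | succ n ih =>
      obtain ⟨⟨h1n, h2n⟩, hdist, hterm⟩ := ih
      have ht0 : 0 ≤ T n := le_trans htr0 h1n
      have hκf : κ < Metric.infDist (α (T n)) Z := hcontra (T n) ⟨h1n, h2n⟩
      have hdQ : 0 ≤ (Metric.infDist (α (T n)) Z - Q)/q := by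
        apply div_nonneg _ hq0.le
        have : Q ≤ 3*Q := by linarith
        linarith [lt_of_le_of_lt (this.trans hκQ) hκf]
      by_cases hteq : T n = tR
      · have hTn1 : T (n+1) = T n := by
          rw [hTs, hteq]
          exact min_eq_right (by linarith [hteq ▸ hdQ])
        rw [hTn1]
        exact ⟨⟨h1n, h2n⟩, hdist, Or.inr hteq⟩
      · have htlt : T n < tR := lt_of_le_of_ne h2n hteq
        set d := Metric.infDist (α (T n)) Z with hddef
        have hd3q2 : 3*q^2 * ρ d < d := hκkey d hκf
        have hdm : d ≤ sR/2 := hfm (T n) ht0 h2n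
        have hQd : 3*Q < d := lt_of_le_of_lt hκQ hκf
        have hqd : 3*q < d := lt_of_le_of_lt hκq hκf
        set Δ := (d - Q)/q with hΔdef
        have hΔ2 : 2 ≤ Δ := by
          rw [hΔdef, le_div_iff₀ hq0]
          linarith only [hqd, hQd]
        have hΔq : q*Δ + Q = d := by
          rw [hΔdef]; field_simp; ring
        have hleft : dist (p (α tr)) (p (α (T n))) ≤ (T n - tr)/(2*q) := by
          rcases hdist with h | ⟨heq, _⟩
          · exact h
          · exact absurd heq hteq
        by_cases hcase : T n + Δ ≤ tR
        · have hTn1 : T (n+1) = T n + Δ := by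
            rw [hTs]; exact min_eq_left hcase
          have hy0 : (0:ℝ) ≤ T n + Δ := by linarith
          have hdxy : dist (α (T n)) (α (T n + Δ)) ≤ d := by
            have hupp := (hαq (T n) (Set.mem_Ici.mpr ht0) (T n + Δ) (Set.mem_Ici.mpr hy0)).2
            have habs : |T n - (T n + Δ)| = Δ := by
              rw [show T n - (T n + Δ) = -Δ by ring, abs_neg,
                abs_of_nonneg (by linarith)]
            rw [habs] at hupp
            linarith
          have hj := hjump (α (T n)) (α (T n + Δ)) hdxy
          have hjlt : ρ d ≤ Δ/(2*q) := by
            rw [le_div_iff₀ (by positivity : (0:ℝ) < 2*q), hΔdef,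
              le_div_iff₀ hq0]
            have e2 : 2*(q^2 * ρ d) ≤ d - Q := by linarith only [hd3q2, hQd]
            calc ρ d * (2*q) * q = 2*(q^2 * ρ d) := by ring
              _ ≤ d - Q := e2
          rw [hTn1]
          refine ⟨⟨by linarith, hcase⟩, Or.inl ?_, Or.inl ?_⟩
          · calc dist (p (α tr)) (p (α (T n + Δ)))
                ≤ dist (p (α tr)) (p (α (T n))) + dist (p (α (T n))) (p (α (T n + Δ))) :=
                  dist_triangle _ _ _
              _ ≤ (T n - tr)/(2*q) + Δ/(2*q) := add_le_add hleft (hj.trans hjlt)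
              _ = (T n + Δ - tr)/(2*q) := by ring
          · rcases hterm with h | h
            · push_cast; push_cast at h; linarith
            · exact absurd h hteq
        · have hTn1 : T (n+1) = tR := by
            rw [hTs]; exact min_eq_right (le_of_lt (lt_of_not_ge hcase))
          have hdxy : dist (α (T n)) (α tR) ≤ d := by
            have hupp := (hαq (T n) (Set.mem_Ici.mpr ht0) tR (Set.mem_Ici.mpr htR0)).2
            have habs : |T n - tR| = tR - T n := by
              rw [abs_sub_comm, abs_of_nonneg (by linarith)]
            rw [habs] at hupp
            have h5 : q*(tR - T n) ≤ q*Δ :=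
              mul_le_mul_of_nonneg_left (by linarith [lt_of_not_ge hcase]) hq0.le
            linarith
          have hj := hjump (α (T n)) (α tR) hdxy
          have hjs : ρ d ≤ sR/2 := by
            have hone := hρ.one_le d Metric.infDist_nonneg
            have hq2 : 1 ≤ q^2 := by
              have h7 := mul_le_mul hq hq zero_le_one (zero_le_one.trans hq)
              calc (1:ℝ) = 1*1 := by ring
                _ ≤ q*q := h7
                _ = q^2 := by ring
            have e3 : 3*ρ d ≤ 3*(q^2 * ρ d) := by
              have h8 : 0 ≤ (q^2 - 1) * ρ d :=
                mul_nonneg (by linarith only [hq2]) (by linarith only [hone])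
              linarith only [h8]
            linarith only [e3, hd3q2, hdm, hsR]
          rw [hTn1]
          refine ⟨⟨hle, le_refl _⟩, Or.inr ⟨rfl, ?_⟩, Or.inr rfl⟩
          calc dist (p (α tr)) (p (α tR))
              ≤ dist (p (α tr)) (p (α (T n))) + dist (p (α (T n))) (p (α tR)) :=
                dist_triangle _ _ _
            _ ≤ (T n - tr)/(2*q) + sR/2 := add_le_add hleft (hj.trans hjs)
            _ ≤ (tR - tr)/(2*q) + sR/2 := by
                have hmono : (T n - tr)/(2*q) ≤ (tR - tr)/(2*q) := by
                  gcongr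
                  all_goals linarith only [h2n, hle]
                linarith only [hmono]
  -- run the chain to completion
  obtain ⟨n, hn⟩ := exists_nat_gt ((tR - tr)/2)
  obtain ⟨⟨hK1, hK2⟩, hKdist, hKterm⟩ := key n
  have hTn : T n = tR := by
    rcases hKterm with h | h
    · exfalso
      have h2n' : (tR - tr)/2 < (n:ℝ) := hn
      have : tR - tr < 2*(n:ℝ) := by linarith
      linarith
    · exact h
  have hP : dist (p (α tr)) (p (α tR)) ≤ (tR - tr)/(2*q) + sR/2 := by
    rcases hKdist with h | ⟨_, h⟩ <;> rw [hTn] at h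
    · linarith [hsR]
    · exact h
  -- final computation
  set D := tR - tr with hDdef
  have hD0 : 0 ≤ D := by rw [hDdef]; linarith
  have hlow := (hαq tr (Set.mem_Ici.mpr htr0) tR (Set.mem_Ici.mpr htR0)).1
  have habs : |tr - tR| = D := by
    rw [abs_sub_comm, abs_of_nonneg hD0]
  rw [habs] at hlow
  have hftr : dist (α tr) (p (α tr)) ≤ sR/2 := by
    rw [← hpd (α tr)]; exact hfm tr htr0 hle
  have hftR : dist (α tR) (p (α tR)) ≤ sR/2 := by
    rw [← hpd (α tR)]; exact hfm tR htR0 (le_refl _)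
  have htri : dist (α tr) (α tR) ≤
      sR/2 + dist (p (α tr)) (p (α tR)) + sR/2 := by
    calc dist (α tr) (α tR)
        ≤ dist (α tr) (p (α tr)) + dist (p (α tr)) (p (α tR)) +
          dist (p (α tR)) (α tR) := dist_triangle4 _ _ _ _
      _ ≤ sR/2 + dist (p (α tr)) (p (α tR)) + sR/2 := by
          rw [dist_comm (p (α tR)) (α tR)]
          linarith
  have hu2 : (1/q)*D = 2*(D/(2*q)) := by
    field_simp
  have hub : D/(2*q) ≤ Q + (3/2)*sR := by
    linarith only [hlow, htri, hP, hu2]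
  have hPub : dist (p (α tr)) (p (α tR)) ≤ (5/2)*sR := by linarith
  -- lower bound for the projection displacement
  obtain ⟨s₁, hs₁0, hbs₁⟩ := hpZ (α tr)
  obtain ⟨s₂, hs₂0, hbs₂⟩ := hpZ (α tR)
  have hds : dist (p (α tr)) (p (α tR)) = |s₁ - s₂| := by
    rw [← hbs₁, ← hbs₂, hb.2 s₁ hs₁0 s₂ hs₂0]
  have hos1 : dist o (b s₁) = s₁ := by
    rw [← hb.1, hb.2 0 Set.self_mem_Ici s₁ hs₁0, zero_sub, abs_neg, abs_of_nonneg hs₁0]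
  have hos2 : dist o (b s₂) = s₂ := by
    rw [← hb.1, hb.2 0 Set.self_mem_Ici s₂ hs₂0, zero_sub, abs_neg, abs_of_nonneg hs₂0]
  have hs1u : s₁ ≤ r + sR/2 := by
    have := dist_triangle o (α tr) (b s₁)
    rw [hos1, htrv, hbs₁] at this
    linarith
  have hs2l : R - sR/2 ≤ s₂ := by
    have := dist_triangle o (α tR) (b s₂)
    rw [hos2] at this
    have h6 : dist o (α tR) ≤ dist o (b s₂) + dist (b s₂) (α tR) := dist_triangle _ _ _
    rw [hos2, htRv, dist_comm (b s₂) (α tR), hbs₂] at h6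
    linarith
  have hlowP : 3*sR < dist (p (α tr)) (p (α tR)) := by
    rw [hds]
    have habs2 : s₂ - s₁ ≤ |s₁ - s₂| := by
      rw [abs_sub_comm]; exact le_abs_self _
    linarith
  linarith
end
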